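/- arXiv:1310.6100 — 4 statements merged into one kernel-verified Lean document; each statement's English description precedes it below -/
import Mathlib

section
/- Let k ∈ ℕ, let Λ be a k-graph, and let ∼ be an equivalence relation on the morphisms of Λ such that: (1) if μ ∼ ν then d(μ) = d(ν); (2) if α ∼ α′ and β ∼ β′ with s(α) = r(β) and s(α′) = r(β′), then αβ ∼ α′β′; (3) if αβ ∼ α′β′ and d(α) = d(α′), then α ∼ α′ and β ∼ β′; (4) if s(α) ∼ r(β), then there exist α′, β′ with α′ ∼ α, β′ ∼ β and s(α′) = r(β′). Then the structure maps descend to the quotient Λ/∼: the formulas d([μ]) = d(μ), r([μ]) = [r(μ)], s([μ]) = [s(μ)] are well defined, and whenever [s(λ)] = [r(μ)] the class [αβ] is independent of the choice of α ∈ [λ], β ∈ [μ] with s(α) = r(β), so [λ][μ] := [αβ] is a well-defined associative composition; with these structure maps Λ/∼ is itself a k-graph (in particular it satisfies the unique factorisation property). -/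
/-- A `k`-graph structure on a type `M` of morphisms: a countable small category whose
objects are identified with the identity morphisms (`r μ`, `s μ` are the identity
morphisms at the codomain/domain of `μ`), equipped with a degree functor
`d : M → ℕ^k` satisfying the unique factorisation property. -/
structure KGraphOn (k : ℕ) (M : Type) where
  countable : Countable M
  d : M → Fin k → ℕ
  r : M → M
  s : M → M
  comp : (μ ν : M) → s μ = r ν → M
  d_r : ∀ μ, d (r μ) = 0
  d_s : ∀ μ, d (s μ) = 0
  s_r : ∀ μ, s (r μ) = r μ
  r_r : ∀ μ, r (r μ) = r μ
  r_s : ∀ μ, r (s μ) = s μ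
  s_s : ∀ μ, s (s μ) = s μ
  r_comp : ∀ μ ν h, r (comp μ ν h) = r μ
  s_comp : ∀ μ ν h, s (comp μ ν h) = s ν
  d_comp : ∀ μ ν h, d (comp μ ν h) = d μ + d ν
  id_comp : ∀ μ, comp (r μ) μ (s_r μ) = μ
  comp_id : ∀ μ, comp μ (s μ) ((r_s μ).symm) = μ
  assoc : ∀ μ ν ρ (h₁ : s μ = r ν) (h₂ : s ν = r ρ),
    comp (comp μ ν h₁) ρ ((s_comp μ ν h₁).trans h₂)
      = comp μ (comp ν ρ h₂) (h₁.trans (r_comp ν ρ h₂).symm)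
  factor : ∀ (m n : Fin k → ℕ) (lam : M), d lam = m + n →
    ∃! p : M × M, ∃ h : s p.1 = r p.2, d p.1 = m ∧ d p.2 = n ∧ comp p.1 p.2 h = lam

open Classical

namespace KGraphOn

variable {k : ℕ} {M : Type}

/-- The first/second factor of `lam` in its factorisation with first factor of degree `m`. -/
noncomputable def split (S : KGraphOn k M) (lam : M) (m : Fin k → ℕ) : M × M :=
  if h : ∃ p : M × M, ∃ hc : S.s p.1 = S.r p.2, S.d p.1 = m ∧ S.comp p.1 p.2 hc = lam
  then h.choose else (lam, lam)

/-- The middle factor `lam(m, n)` of `lam = α β γ` with `d α = m`, `d β = n - m`. -/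
noncomputable def seg (S : KGraphOn k M) (lam : M) (m n : Fin k → ℕ) : M :=
  (S.split (S.split lam m).2 (n - m)).1

end KGraphOn

/-- The closed interval `[0, m] ⊆ ℝ^k`. -/
def cube (k : ℕ) (m : Fin k → ℕ) : Set (Fin k → ℝ) :=
  Set.Icc 0 (fun i => (m i : ℝ))

/-- The relation defining the topological realisation:
`(μ, s) ∼ (ν, t)` iff `μ(⌊s⌋, ⌈s⌉) = ν(⌊t⌋, ⌈t⌉)` and `s - ⌊s⌋ = t - ⌊t⌋`. -/
noncomputable def realRel {k : ℕ} {M : Type} (S : KGraphOn k M) :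
    (Σ lam : M, ↥(cube k (S.d lam))) → (Σ lam : M, ↥(cube k (S.d lam))) → Prop :=
  fun x y =>
    S.seg x.1 (fun i => ⌊x.2.1 i⌋₊) (fun i => ⌈x.2.1 i⌉₊)
      = S.seg y.1 (fun i => ⌊y.2.1 i⌋₊) (fun i => ⌈y.2.1 i⌉₊)
    ∧ (fun i => x.2.1 i - (⌊x.2.1 i⌋₊ : ℝ)) = (fun i => y.2.1 i - (⌊y.2.1 i⌋₊ : ℝ))

noncomputable def realSetoid {k : ℕ} {M : Type} (S : KGraphOn k M) :
    Setoid (Σ lam : M, ↥(cube k (S.d lam))) :=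
  ⟨realRel S, ⟨fun _ => ⟨rfl, rfl⟩, fun h => ⟨h.1.symm, h.2.symm⟩,
    fun h h' => ⟨h.1.trans h'.1, h.2.trans h'.2⟩⟩⟩

/-- The topological realisation `X_Λ` of a `k`-graph. -/
noncomputable def Realisation {k : ℕ} {M : Type} (S : KGraphOn k M) : Type :=
  Quotient (realSetoid S)

noncomputable instance {k : ℕ} {M : Type} (S : KGraphOn k M) :
    TopologicalSpace (Realisation S) :=
  instTopologicalSpaceQuotient


/-
Conditions (2) and (4) say that two classes `[λ], [μ]` with `[s λ] = [r μ]` always have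
composable representatives and that the class of their composite does not depend on that
choice; condition (3) applied to `r μ · μ` and `μ · s μ` makes `r` and `s` respect `∼`. Every
axiom of the quotient is then checked on composable representatives, where it holds in `Λ`.
Unique factorisation in `Λ/∼` comes from that in `Λ`: existence by projecting a factorisation,
uniqueness by condition (3). For associativity, a representative `p` of `[αβ]` composable with
some `γ` is refactorised as `p = α'β'` with `d α' = d α`, and condition (3) gives `α' ∼ α`,
`β' ∼ β`.
-/

namespace KGraphOn

variable {k : ℕ} {M : Type} (S : KGraphOn k M)

lemma r_eq_self_of_d_eq_zero {α : M} (hα : S.d α = 0) : S.r α = α := by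
  obtain ⟨p, -, huniq⟩ := S.factor 0 0 α (by simpa using hα)
  have hr : ((S.r α, α) : M × M) = p := huniq _ ⟨S.s_r α, S.d_r α, hα, S.id_comp α⟩
  have hs : ((α, S.s α) : M × M) = p := huniq _ ⟨(S.r_s α).symm, hα, S.d_s α, S.comp_id α⟩
  exact congrArg Prod.fst (hr.trans hs.symm)

lemma s_eq_self_of_d_eq_zero {α : M} (hα : S.d α = 0) : S.s α = α := by
  rw [← S.r_eq_self_of_d_eq_zero hα, S.s_r]

/-- The conditions (1)–(4) on an equivalence relation `E` on the morphisms of `S`. -/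
structure IsCongruence (E : Setoid M) : Prop where
  d_eq : ∀ μ ν, E.r μ ν → S.d μ = S.d ν
  comp_rel : ∀ α α' β β' (h : S.s α = S.r β) (h' : S.s α' = S.r β'),
    E.r α α' → E.r β β' → E.r (S.comp α β h) (S.comp α' β' h')
  rel_of_comp_rel : ∀ α α' β β' (h : S.s α = S.r β) (h' : S.s α' = S.r β'),
    S.d α = S.d α' → E.r (S.comp α β h) (S.comp α' β' h') → E.r α α' ∧ E.r β β'
  exists_composable : ∀ α β, E.r (S.s α) (S.r β) →
    ∃ α' β', E.r α' α ∧ E.r β' β ∧ S.s α' = S.r β'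

namespace IsCongruence

variable {S} {E : Setoid M} (hE : S.IsCongruence E)
include hE

lemma r_rel {μ ν : M} (h : E.r μ ν) : E.r (S.r μ) (S.r ν) :=
  (hE.rel_of_comp_rel _ _ μ ν (S.s_r μ) (S.s_r ν) (by rw [S.d_r, S.d_r])
    (by rwa [S.id_comp, S.id_comp])).1

lemma s_rel {μ ν : M} (h : E.r μ ν) : E.r (S.s μ) (S.s ν) :=
  (hE.rel_of_comp_rel μ ν _ _ (S.r_s μ).symm (S.r_s ν).symm (hE.d_eq μ ν h)
    (by rwa [S.comp_id, S.comp_id])).2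

def quotR : Quotient E → Quotient E :=
  Quotient.map S.r fun _ _ => hE.r_rel

def quotS : Quotient E → Quotient E :=
  Quotient.map S.s fun _ _ => hE.s_rel

lemma exists_composable_mk {x y : Quotient E} (h : hE.quotS x = hE.quotR y) :
    ∃ α β, ∃ _ : S.s α = S.r β, Quotient.mk E α = x ∧ Quotient.mk E β = y := by
  induction x using Quotient.inductionOn with | _ α =>
  induction y using Quotient.inductionOn with | _ β =>
  obtain ⟨α', β', hα, hβ, hc⟩ := hE.exists_composable α β (Quotient.exact h)
  exact ⟨α', β', hc, Quotient.sound hα, Quotient.sound hβ⟩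

noncomputable def quotComp (x y : Quotient E) (h : hE.quotS x = hE.quotR y) : Quotient E :=
  Quotient.mk E (S.comp _ _ (hE.exists_composable_mk h).choose_spec.choose_spec.fst)

lemma quotComp_eq_mk {α β : M} (hc : S.s α = S.r β) {x y : Quotient E}
    (h : hE.quotS x = hE.quotR y) (hα : Quotient.mk E α = x) (hβ : Quotient.mk E β = y) :
    hE.quotComp x y h = Quotient.mk E (S.comp α β hc) := by
  obtain ⟨hc', hα', hβ'⟩ := (hE.exists_composable_mk h).choose_spec.choose_spec
  exact Quotient.sound (hE.comp_rel _ _ _ _ hc' hc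
    (Quotient.exact (hα'.trans hα.symm)) (Quotient.exact (hβ'.trans hβ.symm)))

lemma exists_comp_eq_of_rel_comp {p α β : M} (hc : S.s α = S.r β)
    (hp : E.r p (S.comp α β hc)) :
    ∃ α' β', ∃ hc' : S.s α' = S.r β', S.comp α' β' hc' = p ∧ E.r α' α ∧ E.r β' β := by
  have hd : S.d p = S.d α + S.d β := by rw [hE.d_eq _ _ hp, S.d_comp]
  obtain ⟨⟨α', β'⟩, ⟨hc', hdα, -, rfl⟩, -⟩ := S.factor (S.d α) (S.d β) p hd
  obtain ⟨hα, hβ⟩ := hE.rel_of_comp_rel α' α β' β hc' hc hdα hp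
  exact ⟨α', β', hc', rfl, hα, hβ⟩

lemma exists_composable_triple_mk {x y z : Quotient E} (hxy : hE.quotS x = hE.quotR y)
    (hyz : hE.quotS y = hE.quotR z) :
    ∃ α β γ, ∃ (_ : S.s α = S.r β) (_ : S.s β = S.r γ),
      Quotient.mk E α = x ∧ Quotient.mk E β = y ∧ Quotient.mk E γ = z := by
  obtain ⟨α, β, hαβ, rfl, rfl⟩ := hE.exists_composable_mk hxy
  have hxy_eq := hE.quotComp_eq_mk hαβ hxy rfl rfl
  have hcomp_z : hE.quotS (hE.quotComp _ _ hxy) = hE.quotR z := by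
    rw [hxy_eq, ← hyz]
    exact congrArg (Quotient.mk E) (S.s_comp α β hαβ)
  obtain ⟨p, γ, hpγ, hp, rfl⟩ := hE.exists_composable_mk hcomp_z
  obtain ⟨α', β', hαβ', rfl, hα, hβ⟩ :=
    hE.exists_comp_eq_of_rel_comp hαβ (Quotient.exact (hp.trans hxy_eq))
  exact ⟨α', β', γ, hαβ', (S.s_comp α' β' hαβ').symm.trans hpγ,
    Quotient.sound hα, Quotient.sound hβ, rfl⟩

lemma quotComp_quotR_self (x : Quotient E) (h : hE.quotS (hE.quotR x) = hE.quotR x) :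
    hE.quotComp _ x h = x := by
  obtain ⟨α, β, hc, hα, rfl⟩ := hE.exists_composable_mk h
  have hα0 : S.d α = 0 := by rw [hE.d_eq _ _ (Quotient.exact hα), S.d_r]
  rw [hE.quotComp_eq_mk hc h hα rfl]
  obtain rfl : α = S.r β := (S.s_eq_self_of_d_eq_zero hα0).symm.trans hc
  rw [S.id_comp]

lemma quotComp_quotS_self (x : Quotient E) (h : hE.quotS x = hE.quotR (hE.quotS x)) :
    hE.quotComp x _ h = x := by
  obtain ⟨α, β, hc, rfl, hβ⟩ := hE.exists_composable_mk h
  have hβ0 : S.d β = 0 := by rw [hE.d_eq _ _ (Quotient.exact hβ), S.d_s]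
  rw [hE.quotComp_eq_mk hc h rfl hβ]
  obtain rfl : β = S.s α := (S.r_eq_self_of_d_eq_zero hβ0).symm.trans hc.symm
  rw [S.comp_id]

noncomputable def quotient : KGraphOn k (Quotient E) where
  countable := haveI := S.countable; inferInstance
  d := Quotient.lift S.d hE.d_eq
  r := hE.quotR
  s := hE.quotS
  comp := hE.quotComp
  d_r := by rintro ⟨μ⟩; exact S.d_r μ
  d_s := by rintro ⟨μ⟩; exact S.d_s μ
  s_r := by rintro ⟨μ⟩; exact congrArg (Quotient.mk E) (S.s_r μ)
  r_r := by rintro ⟨μ⟩; exact congrArg (Quotient.mk E) (S.r_r μ)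
  r_s := by rintro ⟨μ⟩; exact congrArg (Quotient.mk E) (S.r_s μ)
  s_s := by rintro ⟨μ⟩; exact congrArg (Quotient.mk E) (S.s_s μ)
  r_comp x y h := by
    obtain ⟨α, β, hc, rfl, rfl⟩ := hE.exists_composable_mk h
    rw [hE.quotComp_eq_mk hc h rfl rfl]
    exact congrArg (Quotient.mk E) (S.r_comp α β hc)
  s_comp x y h := by
    obtain ⟨α, β, hc, rfl, rfl⟩ := hE.exists_composable_mk h
    rw [hE.quotComp_eq_mk hc h rfl rfl]
    exact congrArg (Quotient.mk E) (S.s_comp α β hc)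
  d_comp x y h := by
    obtain ⟨α, β, hc, rfl, rfl⟩ := hE.exists_composable_mk h
    rw [hE.quotComp_eq_mk hc h rfl rfl]
    exact S.d_comp α β hc
  id_comp x := hE.quotComp_quotR_self x _
  comp_id x := hE.quotComp_quotS_self x _
  assoc x y z hxy hyz := by
    obtain ⟨α, β, γ, hαβ, hβγ, rfl, rfl, rfl⟩ := hE.exists_composable_triple_mk hxy hyz
    have hαβ_γ := (S.s_comp α β hαβ).trans hβγ
    have hα_βγ := hαβ.trans (S.r_comp β γ hβγ).symm
    rw [hE.quotComp_eq_mk hαβ_γ _ (hE.quotComp_eq_mk hαβ hxy rfl rfl).symm rfl,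
      hE.quotComp_eq_mk hα_βγ _ rfl (hE.quotComp_eq_mk hβγ hyz rfl rfl).symm]
    exact congrArg (Quotient.mk E) (S.assoc α β γ hαβ hβγ)
  factor m n := by
    rintro ⟨lam⟩ hd
    obtain ⟨⟨α, β⟩, ⟨hc, hdα, hdβ, hcomp⟩, -⟩ := S.factor m n lam hd
    refine ⟨(Quotient.mk E α, Quotient.mk E β),
      ⟨congrArg (Quotient.mk E) hc, hdα, hdβ, ?_⟩, ?_⟩
    · exact (hE.quotComp_eq_mk hc _ rfl rfl).trans (congrArg (Quotient.mk E) hcomp)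
    · rintro ⟨x, y⟩ ⟨h, hdx, -, hxy⟩
      obtain ⟨α', β', hc', rfl, rfl⟩ := hE.exists_composable_mk h
      rw [hE.quotComp_eq_mk hc' h rfl rfl, ← hcomp] at hxy
      obtain ⟨hα, hβ⟩ :=
        hE.rel_of_comp_rel α' α β' β hc' hc (hdx.trans hdα.symm) (Quotient.exact hxy)
      exact Prod.ext (Quotient.sound hα) (Quotient.sound hβ)

end IsCongruence

end KGraphOn

/-- an equivalence relation on a `k`-graph satisfying conditions (1)–(4)
descends the structure maps to the quotient, which is again a `k`-graph. -/
theorem quotient_kGraph (k : ℕ) (M : Type) (S : KGraphOn k M) (E : Setoid M)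
    (h1 : ∀ μ ν, E.r μ ν → S.d μ = S.d ν)
    (h2 : ∀ α α' β β' (h : S.s α = S.r β) (h' : S.s α' = S.r β'),
      E.r α α' → E.r β β' → E.r (S.comp α β h) (S.comp α' β' h'))
    (h3 : ∀ α α' β β' (h : S.s α = S.r β) (h' : S.s α' = S.r β'),
      S.d α = S.d α' → E.r (S.comp α β h) (S.comp α' β' h') → E.r α α' ∧ E.r β β')
    (h4 : ∀ α β, E.r (S.s α) (S.r β) →
      ∃ α' β', E.r α' α ∧ E.r β' β ∧ S.s α' = S.r β') :
    ∃ S' : KGraphOn k (Quotient E),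
      (∀ μ, S'.d (Quotient.mk E μ) = S.d μ) ∧
      (∀ μ, S'.r (Quotient.mk E μ) = Quotient.mk E (S.r μ)) ∧
      (∀ μ, S'.s (Quotient.mk E μ) = Quotient.mk E (S.s μ)) ∧
      (∀ α β (h : S.s α = S.r β)
          (h' : S'.s (Quotient.mk E α) = S'.r (Quotient.mk E β)),
        S'.comp (Quotient.mk E α) (Quotient.mk E β) h'
          = Quotient.mk E (S.comp α β h)) := by
  have hE : S.IsCongruence E := ⟨h1, h2, h3, h4⟩
  exact ⟨hE.quotient, fun _ => rfl, fun _ => rfl, fun _ => rfl,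
    fun _ _ hc h => hE.quotComp_eq_mk (x := Quotient.mk E _) (y := Quotient.mk E _) hc h rfl rfl⟩
end

section
/- Let k ≥ 1, let Λ be a k-graph, and let ∼ be an equivalence relation on Λ satisfying conditions (1)–(4) of the quotient construction (so that Λ/∼ is a k-graph). Then there is a well-defined equivalence relation ≈ on the topological realisation X_Λ such that [μ,s] ≈ [ν,t] if and only if μ(⌊s⌋,⌈s⌉) ∼ ν(⌊t⌋,⌈t⌉) and s − ⌊s⌋ = t − ⌊t⌋. Writing ⟦λ,t⟧ for the class of [λ,t] under ≈ and [λ]_∼ for the class of λ under ∼, there is a homeomorphism X_Λ/≈ ≅ X_{Λ/∼} satisfying ⟦λ,t⟧ ↦ [[λ]_∼, t] for all λ ∈ Λ and t ∈ [0, d(λ)]. -/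
open Classical

/-!
The quotient map `Λ → Λ/∼` is a degree-preserving functor, and any such functor commutes with
taking segments `λ(m, n)`, by uniqueness of factorisations. It therefore induces a continuous map
`X_Λ → X_{Λ/∼}`, `[λ, t] ↦ [[λ]_∼, t]`, whose fibres are exactly the classes of `≈`. This map is a
quotient map, because on the disjoint unions of cubes it is the surjective open map sending the
cube of `λ` identically onto the cube of `[λ]_∼`; so `X_Λ/≈ ≅ X_{Λ/∼}`.
-/

namespace KGraphOn

variable {k : ℕ} {M N : Type}

lemma d_snd_of_comp_eq (S : KGraphOn k M) {α β lam : M} (hc : S.s α = S.r β)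
    (h : S.comp α β hc = lam) : S.d β = S.d lam - S.d α := by
  rw [← h, S.d_comp, add_tsub_cancel_left]

lemma existsUnique_factor (S : KGraphOn k M) {lam : M} {m : Fin k → ℕ} (hm : m ≤ S.d lam) :
    ∃! p : M × M, ∃ hc : S.s p.1 = S.r p.2,
      S.d p.1 = m ∧ S.d p.2 = S.d lam - m ∧ S.comp p.1 p.2 hc = lam :=
  S.factor m (S.d lam - m) lam (add_tsub_cancel_of_le hm).symm

lemma split_spec (S : KGraphOn k M) {lam : M} {m : Fin k → ℕ} (hm : m ≤ S.d lam) :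
    ∃ hc : S.s (S.split lam m).1 = S.r (S.split lam m).2,
      S.d (S.split lam m).1 = m ∧ S.d (S.split lam m).2 = S.d lam - m ∧
      S.comp (S.split lam m).1 (S.split lam m).2 hc = lam := by
  obtain ⟨p, ⟨hc, hd, -, hp⟩, -⟩ := S.existsUnique_factor hm
  have hex : ∃ p : M × M, ∃ hc : S.s p.1 = S.r p.2, S.d p.1 = m ∧ S.comp p.1 p.2 hc = lam :=
    ⟨p, hc, hd, hp⟩
  obtain ⟨hc', hd', hp'⟩ := hex.choose_spec
  rw [split, dif_pos hex]
  exact ⟨hc', hd', by rw [S.d_snd_of_comp_eq hc' hp', hd'], hp'⟩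

lemma split_eq (S : KGraphOn k M) {lam : M} {m : Fin k → ℕ} (hm : m ≤ S.d lam) {q : M × M}
    (hc : S.s q.1 = S.r q.2) (hq : S.d q.1 = m) (hcomp : S.comp q.1 q.2 hc = lam) :
    S.split lam m = q :=
  (S.existsUnique_factor hm).unique (S.split_spec hm)
    ⟨hc, hq, by rw [S.d_snd_of_comp_eq hc hcomp, hq], hcomp⟩

structure Hom (S : KGraphOn k M) (T : KGraphOn k N) where
  toFun : M → N
  map_d : ∀ μ, T.d (toFun μ) = S.d μ
  map_r : ∀ μ, T.r (toFun μ) = toFun (S.r μ)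
  map_s : ∀ μ, T.s (toFun μ) = toFun (S.s μ)
  map_comp : ∀ α β (h : S.s α = S.r β) (h' : T.s (toFun α) = T.r (toFun β)),
    T.comp (toFun α) (toFun β) h' = toFun (S.comp α β h)

namespace Hom

variable {S : KGraphOn k M} {T : KGraphOn k N}

instance : CoeFun (S.Hom T) fun _ => M → N := ⟨Hom.toFun⟩

lemma map_split (φ : S.Hom T) {lam : M} {m : Fin k → ℕ} (hm : m ≤ S.d lam) :
    T.split (φ lam) m = (φ (S.split lam m).1, φ (S.split lam m).2) := by
  obtain ⟨hc, hd, -, hcomp⟩ := S.split_spec hm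
  have hc' : T.s (φ (S.split lam m).1) = T.r (φ (S.split lam m).2) := by
    rw [φ.map_s, φ.map_r, hc]
  refine T.split_eq (φ.map_d lam ▸ hm) hc' (φ.map_d _ ▸ hd) ?_
  exact (φ.map_comp _ _ hc hc').trans (congrArg φ hcomp)

lemma map_seg (φ : S.Hom T) {lam : M} {m n : Fin k → ℕ} (hmn : m ≤ n) (hn : n ≤ S.d lam) :
    T.seg (φ lam) m n = φ (S.seg lam m n) := by
  have hm := hmn.trans hn
  obtain ⟨-, -, hd, -⟩ := S.split_spec hm
  have hnm : n - m ≤ S.d (S.split lam m).2 := hd ▸ tsub_le_tsub_right hn m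
  rw [seg, seg, φ.map_split hm]
  exact congrArg Prod.fst (φ.map_split hnm)

lemma map_seg_floor_ceil (φ : S.Hom T) (lam : M) (t : ↥(cube k (S.d lam))) :
    T.seg (φ lam) (fun i => ⌊t.1 i⌋₊) (fun i => ⌈t.1 i⌉₊)
      = φ (S.seg lam (fun i => ⌊t.1 i⌋₊) (fun i => ⌈t.1 i⌉₊)) :=
  φ.map_seg (fun _ => Nat.floor_le_ceil _) (fun i => Nat.ceil_le.mpr (t.2.2 i))

def cubeMap (φ : S.Hom T) :
    (Σ lam : M, ↥(cube k (S.d lam))) → Σ ν : N, ↥(cube k (T.d ν)) :=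
  Sigma.map φ fun lam => Homeomorph.setCongr (congrArg (cube k) (φ.map_d lam).symm)

lemma isQuotientMap_cubeMap (φ : S.Hom T) (hφ : Function.Surjective φ) :
    Topology.IsQuotientMap φ.cubeMap :=
  IsOpenMap.isQuotientMap (isOpenMap_sigma_map.2 fun _ => Homeomorph.isOpenMap _)
    (Continuous.sigma_map fun _ => Homeomorph.continuous _)
    (hφ.sigma_map fun _ => Homeomorph.surjective _)

lemma realRel_cubeMap_iff (φ : S.Hom T) (x y : Σ lam : M, ↥(cube k (S.d lam))) :
    realRel T (φ.cubeMap x) (φ.cubeMap y) ↔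
      φ (S.seg x.1 (fun i => ⌊x.2.1 i⌋₊) (fun i => ⌈x.2.1 i⌉₊))
          = φ (S.seg y.1 (fun i => ⌊y.2.1 i⌋₊) (fun i => ⌈y.2.1 i⌉₊)) ∧
        (fun i => x.2.1 i - (⌊x.2.1 i⌋₊ : ℝ)) = (fun i => y.2.1 i - (⌊y.2.1 i⌋₊ : ℝ)) := by
  show T.seg (φ x.1) (fun i => ⌊x.2.1 i⌋₊) (fun i => ⌈x.2.1 i⌉₊)
      = T.seg (φ y.1) (fun i => ⌊y.2.1 i⌋₊) (fun i => ⌈y.2.1 i⌉₊) ∧ _ ↔ _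
  rw [φ.map_seg_floor_ceil, φ.map_seg_floor_ceil]
  rfl

end Hom

end KGraphOn

namespace Realisation

open KGraphOn

variable {k : ℕ} {M N : Type} {S : KGraphOn k M} {T : KGraphOn k N}

noncomputable def map (φ : S.Hom T) : C(Realisation S, Realisation T) where
  toFun := Quotient.map φ.cubeMap fun x y ⟨hseg, hfrac⟩ =>
    (φ.realRel_cubeMap_iff x y).2 ⟨congrArg φ hseg, hfrac⟩
  continuous_toFun :=
    Continuous.quotient_map' (Continuous.sigma_map fun _ => Homeomorph.continuous _) _

lemma map_mk_eq_map_mk_iff (φ : S.Hom T) (μ : M) (s : ↥(cube k (S.d μ))) (ν : M)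
    (t : ↥(cube k (S.d ν))) :
    map φ (Quotient.mk _ ⟨μ, s⟩) = map φ (Quotient.mk _ ⟨ν, t⟩) ↔
      φ (S.seg μ (fun i => ⌊s.1 i⌋₊) (fun i => ⌈s.1 i⌉₊))
          = φ (S.seg ν (fun i => ⌊t.1 i⌋₊) (fun i => ⌈t.1 i⌉₊)) ∧
        (fun i => s.1 i - (⌊s.1 i⌋₊ : ℝ)) = (fun i => t.1 i - (⌊t.1 i⌋₊ : ℝ)) :=
  Quotient.eq.trans (φ.realRel_cubeMap_iff ⟨μ, s⟩ ⟨ν, t⟩)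

lemma isQuotientMap_map (φ : S.Hom T) (hφ : Function.Surjective φ) :
    Topology.IsQuotientMap (map φ) :=
  Topology.IsQuotientMap.of_comp_isQuotientMap isQuotientMap_quotient_mk'
    (isQuotientMap_quotient_mk'.comp (φ.isQuotientMap_cubeMap hφ))

end Realisation

theorem realisation_of_quotient_general (k : ℕ) (M : Type)
    (S : KGraphOn k M) (E : Setoid M)
    -- the induced `k`-graph structure on the quotient `Λ/∼`
    (S' : KGraphOn k (Quotient E))
    (hd' : ∀ μ, S'.d (Quotient.mk E μ) = S.d μ)
    (hr' : ∀ μ, S'.r (Quotient.mk E μ) = Quotient.mk E (S.r μ))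
    (hs' : ∀ μ, S'.s (Quotient.mk E μ) = Quotient.mk E (S.s μ))
    (hc' : ∀ α β (h : S.s α = S.r β)
        (h' : S'.s (Quotient.mk E α) = S'.r (Quotient.mk E β)),
      S'.comp (Quotient.mk E α) (Quotient.mk E β) h' = Quotient.mk E (S.comp α β h)) :
    ∃ R : Setoid (Realisation S),
      (∀ (μ : M) (s : ↥(cube k (S.d μ))) (ν : M) (t : ↥(cube k (S.d ν))),
        R.r (Quotient.mk (realSetoid S) ⟨μ, s⟩) (Quotient.mk (realSetoid S) ⟨ν, t⟩) ↔
          (E.r (S.seg μ (fun i => ⌊s.1 i⌋₊) (fun i => ⌈s.1 i⌉₊))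
               (S.seg ν (fun i => ⌊t.1 i⌋₊) (fun i => ⌈t.1 i⌉₊)) ∧
           (fun i => s.1 i - (⌊s.1 i⌋₊ : ℝ)) = (fun i => t.1 i - (⌊t.1 i⌋₊ : ℝ)))) ∧
      ∃ e : Quotient R ≃ₜ Realisation S',
        ∀ (lam : M) (t : ↥(cube k (S.d lam)))
          (ht : t.1 ∈ cube k (S'.d (Quotient.mk E lam))),
          e (Quotient.mk R (Quotient.mk (realSetoid S) ⟨lam, t⟩))
            = Quotient.mk (realSetoid S') ⟨Quotient.mk E lam, ⟨t.1, ht⟩⟩ := by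
  let φ : S.Hom S' := ⟨Quotient.mk E, hd', hr', hs', hc'⟩
  refine ⟨Setoid.ker (Realisation.map φ), fun μ s ν t => ?_,
    (Realisation.isQuotientMap_map φ Quotient.mk_surjective).homeomorph, fun lam t ht => rfl⟩
  exact (Realisation.map_mk_eq_map_mk_iff φ μ s ν t).trans (and_congr_left' Quotient.eq)

/-- the quotient construction on a `k`-graph is compatible with topological
realisation: `X_Λ/≈ ≅ X_{Λ/∼}`. -/
theorem realisation_of_quotient (k : ℕ) (hk : 1 ≤ k) (M : Type)
    (S : KGraphOn k M) (E : Setoid M)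
    (h1 : ∀ μ ν, E.r μ ν → S.d μ = S.d ν)
    (h2 : ∀ α α' β β' (h : S.s α = S.r β) (h' : S.s α' = S.r β'),
      E.r α α' → E.r β β' → E.r (S.comp α β h) (S.comp α' β' h'))
    (h3 : ∀ α α' β β' (h : S.s α = S.r β) (h' : S.s α' = S.r β'),
      S.d α = S.d α' → E.r (S.comp α β h) (S.comp α' β' h') → E.r α α' ∧ E.r β β')
    (h4 : ∀ α β, E.r (S.s α) (S.r β) →
      ∃ α' β', E.r α' α ∧ E.r β' β ∧ S.s α' = S.r β')
    -- the induced `k`-graph structure on the quotient `Λ/∼`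
    (S' : KGraphOn k (Quotient E))
    (hd' : ∀ μ, S'.d (Quotient.mk E μ) = S.d μ)
    (hr' : ∀ μ, S'.r (Quotient.mk E μ) = Quotient.mk E (S.r μ))
    (hs' : ∀ μ, S'.s (Quotient.mk E μ) = Quotient.mk E (S.s μ))
    (hc' : ∀ α β (h : S.s α = S.r β)
        (h' : S'.s (Quotient.mk E α) = S'.r (Quotient.mk E β)),
      S'.comp (Quotient.mk E α) (Quotient.mk E β) h' = Quotient.mk E (S.comp α β h)) :
    ∃ R : Setoid (Realisation S),
      (∀ (μ : M) (s : ↥(cube k (S.d μ))) (ν : M) (t : ↥(cube k (S.d ν))),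
        R.r (Quotient.mk (realSetoid S) ⟨μ, s⟩) (Quotient.mk (realSetoid S) ⟨ν, t⟩) ↔
          (E.r (S.seg μ (fun i => ⌊s.1 i⌋₊) (fun i => ⌈s.1 i⌉₊))
               (S.seg ν (fun i => ⌊t.1 i⌋₊) (fun i => ⌈t.1 i⌉₊)) ∧
           (fun i => s.1 i - (⌊s.1 i⌋₊ : ℝ)) = (fun i => t.1 i - (⌊t.1 i⌋₊ : ℝ)))) ∧
      ∃ e : Quotient R ≃ₜ Realisation S',
        ∀ (lam : M) (t : ↥(cube k (S.d lam)))
          (ht : t.1 ∈ cube k (S'.d (Quotient.mk E lam))),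
          e (Quotient.mk R (Quotient.mk (realSetoid S) ⟨lam, t⟩))
            = Quotient.mk (realSetoid S') ⟨Quotient.mk E lam, ⟨t.1, ht⟩⟩ :=
  realisation_of_quotient_general k M S E S' hd' hr' hs' hc'
end

section
/- For each k ≥ 1 there is a finite k-graph Γ whose topological realisation X_Γ is homeomorphic to the k-sphere S^k (the unit sphere in ℝ^{k+1}). -/
open Classical

/-!
Subdivide `[0, 2]^k` into unit cubes and orient every edge from the centre `(1, …, 1)` towards
the boundary. A cell is then a morphism from its corner nearest the centre to its corner farthest
from it, composition takes the smallest box containing two cells, and this `k`-graph realises the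
cube. Every cell not contained in the boundary of the cube has the centre as its source, so
doubling the centre vertex doubles exactly those cells: the result is a `k`-graph realising two
copies of the cube glued along their boundary.

A point of the realisation is determined by its position `x ∈ [0, 2]^k` and, when `x` lies off
the boundary, by its sheet. A norm-preserving homeomorphism from `ℝ^k` with the sup norm to
Euclidean `ℝ^k` carries the cube onto the unit ball, and lifting to the upper or lower hemisphere
according to the sheet gives a continuous bijection from the compact realisation onto `S^k`.
-/

namespace KGraphOn

variable {k : ℕ} {M : Type} (S : KGraphOn k M)

theorem split_eq_s3 {lam α β : M} (h : S.s α = S.r β) (hcomp : S.comp α β h = lam) :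
    S.split lam (S.d α) = (α, β) := by
  have hex : ∃ p : M × M, ∃ hc : S.s p.1 = S.r p.2,
      S.d p.1 = S.d α ∧ S.comp p.1 p.2 hc = lam := ⟨(α, β), h, rfl, hcomp⟩
  have hd : S.d lam = S.d α + S.d β := hcomp ▸ S.d_comp α β h
  rw [split, dif_pos hex]
  obtain ⟨hc, hd₁, hcomp'⟩ := hex.choose_spec
  have hd₂ : S.d hex.choose.2 = S.d β := by
    have := S.d_comp _ _ hc
    rw [hcomp', hd, hd₁] at this
    exact (add_left_cancel this).symm
  exact (S.factor _ _ lam hd).unique ⟨hc, hd₁, hd₂, hcomp'⟩ ⟨h, rfl, rfl, hcomp⟩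

end KGraphOn

open Metric Topology

section NormHomeomorph

variable {E F : Type*} [NormedAddCommGroup E] [NormedSpace ℝ E] [NormedAddCommGroup F]
  [NormedSpace ℝ F]

theorem gauge_preimage_continuousLinearEquiv (e : F ≃L[ℝ] E) (s : Set E) (y : F) :
    gauge (e ⁻¹' s) y = gauge s (e y) := by
  simp only [gauge_def', Set.mem_preimage, map_smul]

/-- Rescale each ray by the ratio of the gauges of the two unit balls. -/
theorem ContinuousLinearEquiv.exists_homeomorph_norm_eq (e : E ≃L[ℝ] F) :
    ∃ h : E ≃ₜ F, ∀ x, ‖h x‖ = ‖x‖ := by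
  set s : Set F := e.symm ⁻¹' closedBall 0 1
  have hs : s = e '' closedBall 0 1 := (e.image_eq_preimage_symm _).symm
  have hsc : Convex ℝ s :=
    (convex_closedBall (0 : E) 1).linear_preimage e.symm.toLinearEquiv.toLinearMap
  have hs₀ : s ∈ 𝓝 0 := e.symm.continuous.continuousAt.preimage_mem_nhds
    (by rw [map_zero]; exact closedBall_mem_nhds 0 one_pos)
  have hsb : Bornology.IsVonNBounded ℝ s :=
    hs ▸ (NormedSpace.isVonNBounded_closedBall ℝ E 1).image (e : E →L[ℝ] F)
  refine ⟨e.toHomeomorph.trans (gaugeRescaleHomeomorph s (closedBall 0 1) hsc hs₀ hsb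
    (convex_closedBall 0 1) (closedBall_mem_nhds 0 one_pos)
    (NormedSpace.isVonNBounded_closedBall ℝ F 1)), fun x => ?_⟩
  have := gauge_gaugeRescale s (absorbent_nhds_zero (closedBall_mem_nhds (0 : F) one_pos))
    (NormedSpace.isVonNBounded_closedBall ℝ F 1) (e x)
  rwa [gauge_closedBall zero_le_one, div_one, gauge_preimage_continuousLinearEquiv,
    gauge_closedBall zero_le_one, div_one, ContinuousLinearEquiv.symm_apply_apply] at this

end NormHomeomorph

section Hemisphere

variable {n : ℕ}

/-- The point of the upper (`b = false`) or lower (`b = true`) closed hemisphere of `Sⁿ` above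
the point `w` of the closed unit ball of `ℝⁿ`. -/
noncomputable def toHemisphere (b : Bool) (w : EuclideanSpace ℝ (Fin n)) :
    EuclideanSpace ℝ (Fin (n + 1)) :=
  WithLp.toLp 2
    (Fin.snoc (α := fun _ => ℝ) w.ofLp ((if b then -1 else 1) * √(1 - ‖w‖ ^ 2)))

theorem norm_toLp_snoc_sq (w : EuclideanSpace ℝ (Fin n)) (a : ℝ) :
    ‖(WithLp.toLp 2 (Fin.snoc (α := fun _ => ℝ) w.ofLp a) :
        EuclideanSpace ℝ (Fin (n + 1)))‖ ^ 2 = ‖w‖ ^ 2 + a ^ 2 := by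
  simp [EuclideanSpace.norm_sq_eq, Fin.sum_univ_castSucc]

theorem norm_toHemisphere (b : Bool) {w : EuclideanSpace ℝ (Fin n)} (hw : ‖w‖ ≤ 1) :
    ‖toHemisphere b w‖ = 1 := by
  have h : 0 ≤ 1 - ‖w‖ ^ 2 := by nlinarith [norm_nonneg w]
  rw [← pow_eq_one_iff_of_nonneg (norm_nonneg _) two_ne_zero, toHemisphere, norm_toLp_snoc_sq,
    mul_pow, Real.sq_sqrt h]
  cases b <;> norm_num

theorem toHemisphere_eq_toHemisphere_iff {b b' : Bool} {w w' : EuclideanSpace ℝ (Fin n)}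
    (hw : ‖w‖ ≤ 1) :
    toHemisphere b w = toHemisphere b' w' ↔ w = w' ∧ (‖w‖ < 1 → b = b') := by
  rw [toHemisphere, toHemisphere, (WithLp.toLp_injective 2).eq_iff, Fin.snoc_inj,
    (WithLp.ofLp_injective 2).eq_iff]
  refine and_congr_right fun hww => ?_
  subst hww
  rcases hw.eq_or_lt with h1 | h1
  · simp [h1]
  · have : 0 < √(1 - ‖w‖ ^ 2) := Real.sqrt_pos.2 (by nlinarith [norm_nonneg w])
    cases b <;> cases b' <;> simp [h1] <;> linarith

theorem exists_toHemisphere_eq {y : EuclideanSpace ℝ (Fin (n + 1))} (hy : ‖y‖ = 1) :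
    ∃ b w, ‖w‖ ≤ 1 ∧ toHemisphere b w = y := by
  set w : EuclideanSpace ℝ (Fin n) := WithLp.toLp 2 (Fin.init y.ofLp)
  set a := y.ofLp (Fin.last n)
  have hy' : (WithLp.toLp 2 (Fin.snoc (α := fun _ => ℝ) w.ofLp a) :
      EuclideanSpace ℝ (Fin (n + 1))) = y := by
    simp [w, a, Fin.snoc_init_self]
  have hsq : ‖w‖ ^ 2 + a ^ 2 = 1 := by rw [← norm_toLp_snoc_sq, hy', hy, one_pow]
  refine ⟨decide (a < 0), w, by nlinarith [norm_nonneg w, sq_nonneg a], ?_⟩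
  rw [← hy', toHemisphere, show 1 - ‖w‖ ^ 2 = a ^ 2 by linarith, Real.sqrt_sq_eq_abs]
  congr 2
  rcases lt_or_ge a 0 with ha | ha
  · simp [ha, abs_of_neg ha]
  · simp [not_lt.2 ha, abs_of_nonneg ha]

theorem continuous_toHemisphere (b : Bool) : Continuous (toHemisphere (n := n) b) := by
  have hlast : Continuous fun w : EuclideanSpace ℝ (Fin n) =>
      (if b then (-1 : ℝ) else 1) * √(1 - ‖w‖ ^ 2) := by fun_prop
  exact (PiLp.continuous_toLp 2 _).comp
    (Continuous.finSnoc (A := fun _ => ℝ) (PiLp.continuous_ofLp 2 fun _ : Fin n => ℝ) hlast)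

end Hemisphere

instance (k : ℕ) (m : Fin k → ℕ) : CompactSpace (cube k m) :=
  isCompact_iff_compactSpace.1 isCompact_Icc

theorem Quotient.nonempty_homeomorph_of_fibres {X Y : Type*} [TopologicalSpace X]
    [CompactSpace X] [TopologicalSpace Y] [T2Space Y] (s : Setoid X) {f : X → Y}
    (hf : Continuous f) (hsurj : Function.Surjective f) (hfib : ∀ x y, f x = f y ↔ s x y) :
    Nonempty (Quotient s ≃ₜ Y) := by
  let F : Quotient s → Y := Quotient.lift f fun x y h => (hfib x y).2 h
  have hF : Function.Bijective F :=
    ⟨fun a b => Quotient.inductionOn₂ a b fun x y h => Quotient.sound ((hfib x y).1 h),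
      fun y => (hsurj y).elim fun x hx => ⟨Quotient.mk s x, hx⟩⟩
  exact ⟨(hf.quotient_lift _ : Continuous F).homeoOfEquivCompactToT2
    (f := Equiv.ofBijective F hF)⟩

namespace SphereGraph

open Set

noncomputable section

variable {k : ℕ}

/-- A vertex `(a, a)` or an edge `(a, a + 1)` of the subdivision of `[0, 2]` at the integers. -/
def IsSeg (c : ℕ × ℕ) : Prop := c.1 ≤ c.2 ∧ c.2 ≤ c.1 + 1 ∧ c.2 ≤ 2

instance : DecidablePred IsSeg := fun _ => inferInstanceAs (Decidable (_ ∧ _ ∧ _))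

theorem IsSeg.cases {c : ℕ × ℕ} (h : IsSeg c) :
    c = (0, 0) ∨ c = (1, 1) ∨ c = (2, 2) ∨ c = (0, 1) ∨ c = (1, 2) := by
  obtain ⟨a, b⟩ := c
  obtain ⟨h₁, h₂, h₃⟩ := h
  simp only [Prod.mk.injEq]
  omega

namespace Seg

/-- The edges point from the centre `1` towards `0` and `2`: `far c` is the range and `near c`
the source of the segment `c`. -/
def far (c : ℕ × ℕ) : ℕ := if c.2 ≤ 1 then c.1 else c.2

def near (c : ℕ × ℕ) : ℕ := if c.2 ≤ 1 then c.2 else c.1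

def len (c : ℕ × ℕ) : ℕ := c.2 - c.1

def join (c c' : ℕ × ℕ) : ℕ × ℕ := (min c.1 c'.1, max c.2 c'.2)

/-- The segment meets the open interval `(0, 2)`. -/
def IsInner (c : ℕ × ℕ) : Prop := c.1 = c.2 → c.1 = 1

instance : DecidablePred IsInner := fun _ => inferInstanceAs (Decidable (_ → _))

def rangeVertex (c : ℕ × ℕ) : ℕ × ℕ := (far c, far c)

def sourceVertex (c : ℕ × ℕ) : ℕ × ℕ := (near c, near c)

def head (m : ℕ) (c : ℕ × ℕ) : ℕ × ℕ := if m = 0 then rangeVertex c else c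

def tail (m : ℕ) (c : ℕ × ℕ) : ℕ × ℕ := if m = 0 then c else sourceVertex c

variable {c c' c'' : ℕ × ℕ}

theorem isSeg_rangeVertex (h : IsSeg c) : IsSeg (rangeVertex c) := by
  rcases h.cases with rfl | rfl | rfl | rfl | rfl <;> decide

theorem isSeg_sourceVertex (h : IsSeg c) : IsSeg (sourceVertex c) := by
  rcases h.cases with rfl | rfl | rfl | rfl | rfl <;> decide

theorem len_rangeVertex : len (rangeVertex c) = 0 := Nat.sub_self _

theorem len_sourceVertex : len (sourceVertex c) = 0 := Nat.sub_self _

theorem far_diag (n : ℕ) : far (n, n) = n := ite_self n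

theorem near_diag (n : ℕ) : near (n, n) = n := ite_self n

theorem rangeVertex_rangeVertex : rangeVertex (rangeVertex c) = rangeVertex c := by
  simp only [rangeVertex, far_diag]

theorem sourceVertex_rangeVertex : sourceVertex (rangeVertex c) = rangeVertex c := by
  simp only [sourceVertex, rangeVertex, near_diag]

theorem rangeVertex_sourceVertex : rangeVertex (sourceVertex c) = sourceVertex c := by
  simp only [sourceVertex, rangeVertex, far_diag]

theorem sourceVertex_sourceVertex : sourceVertex (sourceVertex c) = sourceVertex c := by
  simp only [sourceVertex, near_diag]

theorem isInner_sourceVertex_iff (h : IsSeg c) : IsInner (sourceVertex c) ↔ IsInner c := by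
  rcases h.cases with rfl | rfl | rfl | rfl | rfl <;> decide

theorem eq_of_isInner_rangeVertex (h : IsSeg c) (hr : IsInner (rangeVertex c)) : c = (1, 1) := by
  revert hr; rcases h.cases with rfl | rfl | rfl | rfl | rfl <;> decide

theorem isInner_join (h : IsSeg c) (h' : IsSeg c') (hi : IsInner c') : IsInner (join c c') := by
  revert hi; rcases h.cases with rfl | rfl | rfl | rfl | rfl <;>
    rcases h'.cases with rfl | rfl | rfl | rfl | rfl <;> decide

theorem join_assoc : join (join c c') c'' = join c (join c' c'') := by
  simp only [join, min_assoc, max_assoc]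

theorem join_rangeVertex_self (h : IsSeg c) : join (rangeVertex c) c = c := by
  rcases h.cases with rfl | rfl | rfl | rfl | rfl <;> decide

theorem join_sourceVertex_self (h : IsSeg c) : join c (sourceVertex c) = c := by
  rcases h.cases with rfl | rfl | rfl | rfl | rfl <;> decide

section Composable

variable (h : IsSeg c) (h' : IsSeg c') (hc : sourceVertex c = rangeVertex c')
include h h' hc

theorem isSeg_join : IsSeg (join c c') := by
  revert hc; rcases h.cases with rfl | rfl | rfl | rfl | rfl <;>
    rcases h'.cases with rfl | rfl | rfl | rfl | rfl <;> decide

theorem len_join : len (join c c') = len c + len c' := by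
  revert hc; rcases h.cases with rfl | rfl | rfl | rfl | rfl <;>
    rcases h'.cases with rfl | rfl | rfl | rfl | rfl <;> decide

theorem rangeVertex_join : rangeVertex (join c c') = rangeVertex c := by
  revert hc; rcases h.cases with rfl | rfl | rfl | rfl | rfl <;>
    rcases h'.cases with rfl | rfl | rfl | rfl | rfl <;> decide

theorem sourceVertex_join : sourceVertex (join c c') = sourceVertex c' := by
  revert hc; rcases h.cases with rfl | rfl | rfl | rfl | rfl <;>
    rcases h'.cases with rfl | rfl | rfl | rfl | rfl <;> decide

/-- Unique factorisation in dimension one. -/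
theorem eq_head_tail_join : c = head (len c) (join c c') ∧ c' = tail (len c) (join c c') := by
  revert hc; rcases h.cases with rfl | rfl | rfl | rfl | rfl <;>
    rcases h'.cases with rfl | rfl | rfl | rfl | rfl <;> decide

end Composable

theorem len_le_one (h : IsSeg c) : len c ≤ 1 := by
  have := h.2.1; unfold len; omega

theorem sourceVertex_head (m : ℕ) : sourceVertex (head m c) = rangeVertex (tail m c) := by
  unfold head tail; split_ifs
  exacts [sourceVertex_rangeVertex, rangeVertex_sourceVertex.symm]

section Factor

variable (m : ℕ) (h : IsSeg c)
include h

theorem isSeg_head : IsSeg (head m c) := by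
  unfold head; split_ifs
  exacts [isSeg_rangeVertex h, h]

theorem isSeg_tail : IsSeg (tail m c) := by
  unfold tail; split_ifs
  exacts [h, isSeg_sourceVertex h]

theorem join_head_tail : join (head m c) (tail m c) = c := by
  unfold head tail; split_ifs
  exacts [join_rangeVertex_self h, join_sourceVertex_self h]

theorem isInner_tail (hi : IsInner c) : IsInner (tail m c) := by
  unfold tail; split_ifs
  exacts [hi, (isInner_sourceVertex_iff h).2 hi]

variable {m}

theorem len_head (hm : m ≤ len c) : len (head m c) = m := by
  unfold head; split_ifs with h0
  · rw [h0, len_rangeVertex]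
  · have := len_le_one h; omega

theorem len_tail (hm : m ≤ len c) : len (tail m c) = len c - m := by
  unfold tail; split_ifs with h0
  · rw [h0, Nat.sub_zero]
  · have := len_le_one h; rw [len_sourceVertex]; omega

end Factor

end Seg

open Seg

def IsInterior (c : Fin k → ℕ × ℕ) : Prop := ∀ i, IsInner (c i)

/-- A cell of the subdivision of `[0, 2]^k` into unit cubes, given by its coordinate segments,
on one of two sheets. A cell in the boundary of `[0, 2]^k` is shared by both sheets and is
kept on the sheet `false`. -/
@[ext]
structure Mor (k : ℕ) where
  cell : Fin k → ℕ × ℕ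
  sheet : Bool
  isSeg : ∀ i, IsSeg (cell i)
  isInterior_of_sheet : sheet = true → IsInterior cell

namespace Mor

def ofCell (c : Fin k → ℕ × ℕ) (hc : ∀ i, IsSeg (c i)) (b : Bool) : Mor k :=
  ⟨c, b && decide (IsInterior c), hc, fun hb => of_decide_eq_true (Bool.and_eq_true_iff.1 hb).2⟩

theorem ofCell_eq_ofCell_iff {c c' : Fin k → ℕ × ℕ} {hc : ∀ i, IsSeg (c i)}
    {hc' : ∀ i, IsSeg (c' i)} {b b' : Bool} :
    ofCell c hc b = ofCell c' hc' b' ↔ c = c' ∧ (IsInterior c → b = b') := by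
  rw [Mor.ext_iff]
  refine and_congr_right fun h => ?_
  subst h
  by_cases hi : IsInterior c <;> simp [ofCell, hi]

def deg (μ : Mor k) : Fin k → ℕ := fun i => len (μ.cell i)

def r (μ : Mor k) : Mor k :=
  ofCell (fun i => rangeVertex (μ.cell i)) (fun i => isSeg_rangeVertex (μ.isSeg i)) μ.sheet

def s (μ : Mor k) : Mor k :=
  ⟨fun i => sourceVertex (μ.cell i), μ.sheet, fun i => isSeg_sourceVertex (μ.isSeg i),
    fun hb i => (isInner_sourceVertex_iff (μ.isSeg i)).2 (μ.isInterior_of_sheet hb i)⟩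

def comp (μ ν : Mor k) (h : μ.s = ν.r) : Mor k :=
  ⟨fun i => join (μ.cell i) (ν.cell i), ν.sheet,
    fun i => isSeg_join (μ.isSeg i) (ν.isSeg i) (congrFun (congrArg cell h) i),
    fun hb i => isInner_join (μ.isSeg i) (ν.isSeg i) (ν.isInterior_of_sheet hb i)⟩

theorem sheet_eq_of_s_eq_r {μ ν : Mor k} (h : μ.s = ν.r) :
    μ.sheet = (ν.sheet && decide (IsInterior fun i => rangeVertex (ν.cell i))) :=
  congrArg sheet h

def head (μ : Mor k) (m : Fin k → ℕ) : Mor k :=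
  ofCell (fun i => Seg.head (m i) (μ.cell i)) (fun i => isSeg_head _ (μ.isSeg i)) μ.sheet

def tail (μ : Mor k) (m : Fin k → ℕ) : Mor k :=
  ⟨fun i => Seg.tail (m i) (μ.cell i), μ.sheet, fun i => isSeg_tail _ (μ.isSeg i),
    fun hb i => isInner_tail _ (μ.isSeg i) (μ.isInterior_of_sheet hb i)⟩

variable {μ ν ρ : Mor k}

theorem s_r (μ : Mor k) : μ.r.s = μ.r := by
  ext1
  · funext i; exact sourceVertex_rangeVertex
  · rfl

theorem r_r (μ : Mor k) : μ.r.r = μ.r := by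
  ext1
  · funext i; exact rangeVertex_rangeVertex
  · simp only [r, ofCell, rangeVertex_rangeVertex, Bool.and_assoc, Bool.and_self]

theorem r_s (μ : Mor k) : μ.s.r = μ.s := by
  ext1
  · funext i; exact rangeVertex_sourceVertex
  · simp only [r, s, ofCell, rangeVertex_sourceVertex, Bool.and_eq_left_iff_imp,
      decide_eq_true_eq]
    exact fun hb i => (isInner_sourceVertex_iff (μ.isSeg i)).2 (μ.isInterior_of_sheet hb i)

theorem s_s (μ : Mor k) : μ.s.s = μ.s := by
  ext1
  · funext i; exact sourceVertex_sourceVertex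
  · rfl

theorem r_comp (h : μ.s = ν.r) : (μ.comp ν h).r = μ.r := by
  have hc i : sourceVertex (μ.cell i) = rangeVertex (ν.cell i) := congrFun (congrArg cell h) i
  have hrange i : rangeVertex ((μ.comp ν h).cell i) = rangeVertex (μ.cell i) :=
    rangeVertex_join (μ.isSeg i) (ν.isSeg i) (hc i)
  ext1
  · funext i; exact hrange i
  · simp only [r, ofCell, hrange]
    by_cases hμ : IsInterior fun i => rangeVertex (μ.cell i)
    · -- `μ` is then the centre vertex, and so is the range of `ν`
      have hcentre i : μ.cell i = (1, 1) := eq_of_isInner_rangeVertex (μ.isSeg i) (hμ i)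
      have hν : IsInterior fun i => rangeVertex (ν.cell i) := fun i => by
        show IsInner (rangeVertex (ν.cell i))
        rw [← hc i, hcentre i]; decide
      simp [hμ, comp, sheet_eq_of_s_eq_r h, hν]
    · simp [hμ]

theorem s_comp (h : μ.s = ν.r) : (μ.comp ν h).s = ν.s := by
  ext1
  · funext i; exact sourceVertex_join (μ.isSeg i) (ν.isSeg i) (congrFun (congrArg cell h) i)
  · rfl

theorem deg_comp (h : μ.s = ν.r) : (μ.comp ν h).deg = μ.deg + ν.deg := by
  funext i; exact len_join (μ.isSeg i) (ν.isSeg i) (congrFun (congrArg cell h) i)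

theorem r_comp_self (μ : Mor k) : μ.r.comp μ μ.s_r = μ := by
  ext1
  · funext i; exact join_rangeVertex_self (μ.isSeg i)
  · rfl

theorem comp_s_self (μ : Mor k) : μ.comp μ.s μ.r_s.symm = μ := by
  ext1
  · funext i; exact join_sourceVertex_self (μ.isSeg i)
  · rfl

theorem comp_assoc (h₁ : μ.s = ν.r) (h₂ : ν.s = ρ.r) :
    (μ.comp ν h₁).comp ρ ((s_comp h₁).trans h₂) =
      μ.comp (ν.comp ρ h₂) (h₁.trans (r_comp h₂).symm) := by
  ext1
  · funext i; exact join_assoc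
  · rfl

theorem isInterior_rangeVertex_iff (h : μ.s = ν.r) :
    (IsInterior fun i => rangeVertex (ν.cell i)) ↔ IsInterior μ.cell :=
  forall_congr' fun i => by
    have hc : sourceVertex (μ.cell i) = rangeVertex (ν.cell i) := congrFun (congrArg cell h) i
    show IsInner (rangeVertex (ν.cell i)) ↔ _
    rw [← hc]; exact isInner_sourceVertex_iff (μ.isSeg i)

theorem s_head (μ : Mor k) (m : Fin k → ℕ) : (μ.head m).s = (μ.tail m).r := by
  have hi : IsInterior (fun i => Seg.head (m i) (μ.cell i)) ↔
      IsInterior fun i => rangeVertex (Seg.tail (m i) (μ.cell i)) :=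
    forall_congr' fun i => by
      show _ ↔ IsInner (rangeVertex (Seg.tail (m i) (μ.cell i)))
      rw [← sourceVertex_head]; exact (isInner_sourceVertex_iff (isSeg_head _ (μ.isSeg i))).symm
  ext1
  · funext i; exact sourceVertex_head _
  · exact congrArg (μ.sheet && ·) (decide_eq_decide.2 hi)

theorem comp_head_tail (μ : Mor k) (m : Fin k → ℕ) :
    (μ.head m).comp (μ.tail m) (s_head μ m) = μ := by
  ext1
  · funext i; exact join_head_tail _ (μ.isSeg i)
  · rfl

theorem deg_head {m : Fin k → ℕ} (hm : m ≤ μ.deg) : (μ.head m).deg = m := by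
  funext i; exact len_head (μ.isSeg i) (hm i)

theorem deg_tail {m : Fin k → ℕ} (hm : m ≤ μ.deg) : (μ.tail m).deg = μ.deg - m := by
  funext i; exact len_tail (μ.isSeg i) (hm i)

theorem eq_head_tail_of_comp (h : μ.s = ν.r) :
    μ = (μ.comp ν h).head μ.deg ∧ ν = (μ.comp ν h).tail μ.deg := by
  have hc i := eq_head_tail_join (μ.isSeg i) (ν.isSeg i) (congrFun (congrArg cell h) i)
  have hμ : μ.cell = fun i => Seg.head (μ.deg i) ((μ.comp ν h).cell i) :=
    funext fun i => (hc i).1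
  refine ⟨?_, Mor.ext (funext fun i => (hc i).2) rfl⟩
  ext1
  · exact hμ
  · simp only [sheet_eq_of_s_eq_r h, head, ofCell, ← hμ, isInterior_rangeVertex_iff h]
    rfl

end Mor

instance : Finite {c : ℕ × ℕ // IsSeg c} :=
  ((Set.finite_Iic ((2, 2) : ℕ × ℕ)).subset fun c (h : IsSeg c) =>
    show c.1 ≤ 2 ∧ c.2 ≤ 2 from ⟨h.1.trans h.2.2, h.2.2⟩).to_subtype

instance : Finite (Mor k) :=
  Finite.of_injective
    (fun μ : Mor k =>
      ((fun i => ⟨μ.cell i, μ.isSeg i⟩ : Fin k → {c // IsSeg c}), μ.sheet))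
    fun _ _ h => Mor.ext (funext fun i => congrArg Subtype.val (congrFun (congrArg Prod.fst h) i))
      (congrArg Prod.snd h)

variable (k) in
def sphereGraph : KGraphOn k (Mor k) where
  countable := inferInstance
  d := Mor.deg
  r := Mor.r
  s := Mor.s
  comp := Mor.comp
  d_r _ := funext fun _ => len_rangeVertex
  d_s _ := funext fun _ => len_sourceVertex
  s_r := Mor.s_r
  r_r := Mor.r_r
  r_s := Mor.r_s
  s_s := Mor.s_s
  r_comp _ _ := Mor.r_comp
  s_comp _ _ := Mor.s_comp
  d_comp _ _ := Mor.deg_comp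
  id_comp := Mor.r_comp_self
  comp_id := Mor.comp_s_self
  assoc _ _ _ := Mor.comp_assoc
  factor m n lam hd := by
    have hm : m ≤ lam.deg := hd ▸ fun i => Nat.le_add_right _ _
    refine ⟨(lam.head m, lam.tail m),
      ⟨lam.s_head m, Mor.deg_head hm, by rw [Mor.deg_tail hm, hd, add_tsub_cancel_left],
        lam.comp_head_tail m⟩, ?_⟩
    rintro ⟨_, _⟩ ⟨h, rfl, -, rfl⟩
    obtain ⟨hμ, hν⟩ := Mor.eq_head_tail_of_comp h
    exact Prod.ext hμ hν

namespace Seg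

variable {c : ℕ × ℕ} {t x y : ℝ}

/-- The point of `[0, 2]` at distance `t` from the range end of the segment `c`. -/
def pos (c : ℕ × ℕ) (t : ℝ) : ℝ := far c + t * (near c - far c)

def carrier (x : ℝ) : ℕ × ℕ := (⌊x⌋₊, ⌈x⌉₊)

theorem far_near_cases (c : ℕ × ℕ) :
    (far c = c.1 ∧ near c = c.2) ∨ (far c = c.2 ∧ near c = c.1) := by
  unfold far near; split_ifs <;> simp

theorem carrier_natCast (n : ℕ) : carrier n = (n, n) := by
  simp [carrier]

theorem carrier_of_mem_Ioo {a : ℕ} (hx : x ∈ Ioo (a : ℝ) (a + 1)) :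
    carrier x = (a, a + 1) := by
  have h0 : 0 ≤ x := (Nat.cast_nonneg a).trans hx.1.le
  rw [carrier, Nat.floor_eq_iff h0 |>.2 ⟨hx.1.le, hx.2⟩,
    Nat.ceil_eq_iff (Nat.succ_ne_zero a) |>.2 ⟨by simpa using hx.1, by simpa using hx.2.le⟩]

theorem isSeg_carrier (hx : x ∈ Icc (0 : ℝ) 2) : IsSeg (carrier x) :=
  ⟨Nat.floor_le_ceil x, Nat.ceil_le_floor_add_one x, Nat.ceil_le.2 (by simpa using hx.2)⟩

theorem mem_Icc_carrier (hx : 0 ≤ x) : x ∈ Icc ((carrier x).1 : ℝ) (carrier x).2 :=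
  ⟨Nat.floor_le hx, Nat.le_ceil x⟩

theorem eq_of_carrier_eq (hx : 0 ≤ x) (hy : 0 ≤ y) (hc : carrier x = carrier y)
    (hd : |x - far (carrier x)| = |y - far (carrier y)|) : x = y := by
  have hxc := mem_Icc_carrier hx
  have hyc := mem_Icc_carrier hy
  rw [← hc] at hyc hd
  rcases far_near_cases (carrier x) with ⟨he, -⟩ | ⟨he, -⟩ <;> rw [he] at hd
  · rw [abs_of_nonneg (by linarith [hxc.1]), abs_of_nonneg (by linarith [hyc.1])] at hd
    linarith
  · rw [abs_of_nonpos (by linarith [hxc.2]), abs_of_nonpos (by linarith [hyc.2])] at hd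
    linarith

theorem pos_zero (c : ℕ × ℕ) : pos c 0 = far c := by simp [pos]

theorem pos_one (c : ℕ × ℕ) : pos c 1 = near c := by simp [pos]

theorem cases_of_mem_Icc (h : IsSeg c) (ht : t ∈ Icc (0 : ℝ) (len c)) :
    t = 0 ∨ t = 1 ∨ (t ∈ Ioo 0 1 ∧ (c = (0, 1) ∨ c = (1, 2))) := by
  have hlen : (len c : ℝ) ≤ 1 := by exact_mod_cast len_le_one h
  rcases ht.1.eq_or_lt with rfl | h0
  · exact Or.inl rfl
  rcases (ht.2.trans hlen).eq_or_lt with rfl | h1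
  · exact Or.inr (Or.inl rfl)
  refine Or.inr (Or.inr ⟨⟨h0, h1⟩, ?_⟩)
  have hpos : 0 < len c := by exact_mod_cast h0.trans_le ht.2
  rcases h.cases with rfl | rfl | rfl | rfl | rfl <;> simp_all [len]

theorem carrier_pos (h : IsSeg c) (ht : t ∈ Icc (0 : ℝ) (len c)) :
    carrier (pos c t) = head (⌈t⌉₊ - ⌊t⌋₊) (tail ⌊t⌋₊ c) := by
  rcases cases_of_mem_Icc h ht with rfl | rfl | ⟨ht', rfl | rfl⟩
  · simp [pos_zero, carrier_natCast, head, tail, rangeVertex]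
  · simp [pos_one, carrier_natCast, head, tail, sourceVertex, rangeVertex, far_diag]
  all_goals
    obtain ⟨hfloor, hceil⟩ := Prod.mk.inj (carrier_of_mem_Ioo (a := 0) (by simpa using ht'))
    rw [hfloor, hceil]
    norm_num [head, tail, pos, far, near]
  · exact carrier_of_mem_Ioo (a := 0) (by simpa using ht')
  · exact carrier_of_mem_Ioo (a := 1) (by constructor <;> norm_num <;> linarith [ht'.1, ht'.2])

theorem sub_floor_eq (h : IsSeg c) (ht : t ∈ Icc (0 : ℝ) (len c)) :
    t - ⌊t⌋₊ = |pos c t - far (carrier (pos c t))| := by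
  rw [carrier_pos h ht]
  rcases cases_of_mem_Icc h ht with rfl | rfl | ⟨ht', rfl | rfl⟩
  · simp [pos_zero, head, tail, rangeVertex, far_diag]
  · simp [pos_one, head, tail, sourceVertex, rangeVertex, far_diag]
  all_goals
    obtain ⟨hfloor, hceil⟩ := Prod.mk.inj (carrier_of_mem_Ioo (a := 0) (by simpa using ht'))
    rw [hfloor, hceil]
    norm_num [head, tail, pos, far, near, abs_of_pos ht'.1]

theorem pos_mem_Icc (h : IsSeg c) (ht : t ∈ Icc (0 : ℝ) (len c)) :
    pos c t ∈ Icc (0 : ℝ) 2 := by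
  have ht1 : t ≤ 1 := ht.2.trans (by exact_mod_cast len_le_one h)
  have hfn : far c ≤ 2 ∧ near c ≤ 2 := by
    have := h.2.2; have := h.1
    rcases far_near_cases c with ⟨hf, hn⟩ | ⟨hf, hn⟩ <;> omega
  have hf : (far c : ℝ) ≤ 2 := by exact_mod_cast hfn.1
  have hn : (near c : ℝ) ≤ 2 := by exact_mod_cast hfn.2
  have hf0 : (0 : ℝ) ≤ far c := Nat.cast_nonneg _
  have hn0 : (0 : ℝ) ≤ near c := Nat.cast_nonneg _
  constructor <;> unfold pos <;> nlinarith [ht.1]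

theorem isInner_carrier_iff (hx : x ∈ Icc (0 : ℝ) 2) : IsInner (carrier x) ↔ |x - 1| < 1 := by
  rw [abs_sub_lt_iff, IsInner]
  constructor
  · intro hi
    by_contra hb
    obtain rfl | rfl : x = 0 ∨ x = 2 := by
      rcases not_and_or.1 hb with h | h
      exacts [Or.inr (by linarith [hx.2]), Or.inl (by linarith [hx.1])]
    all_goals simp [carrier] at hi
  · intro hlt heq
    have hxc := mem_Icc_carrier hx.1
    have hn : x = (carrier x).1 := le_antisymm (by rw [heq]; exact hxc.2) hxc.1
    have h0 : (0 : ℝ) < (carrier x).1 := by linarith [hlt.2]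
    have h2 : ((carrier x).1 : ℝ) < 2 := by linarith [hlt.1]
    have : 0 < (carrier x).1 ∧ (carrier x).1 < 2 :=
      ⟨by exact_mod_cast h0, by exact_mod_cast h2⟩
    omega

theorem abs_sub_far_carrier_mem_Icc (hx : 0 ≤ x) :
    |x - far (carrier x)| ∈ Icc (0 : ℝ) (len (carrier x)) := by
  have hxc := mem_Icc_carrier hx
  rw [len, Nat.cast_sub (show (carrier x).1 ≤ (carrier x).2 from Nat.floor_le_ceil x)]
  refine ⟨abs_nonneg _, abs_sub_le_iff.2 ?_⟩
  rcases far_near_cases (carrier x) with ⟨hf, -⟩ | ⟨hf, -⟩ <;> rw [hf] <;>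
    constructor <;> linarith [hxc.1, hxc.2]

theorem pos_carrier (hx : x ∈ Icc (0 : ℝ) 2) : pos (carrier x) |x - far (carrier x)| = x := by
  have hxc := mem_Icc_carrier hx.1
  have hseg := isSeg_carrier hx
  have hedge :
      ((carrier x).2 : ℝ) = (carrier x).1 ∨ ((carrier x).2 : ℝ) = (carrier x).1 + 1 := by
    have := hseg.1
    rcases hseg.2.1.eq_or_lt with h | h
    · exact Or.inr (by exact_mod_cast h)
    · exact Or.inl (by exact_mod_cast (by omega : (carrier x).2 = (carrier x).1))
  rw [pos]
  rcases far_near_cases (carrier x) with ⟨hf, hn⟩ | ⟨hf, hn⟩ <;> rw [hf, hn]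
  · rw [abs_of_nonneg (by linarith [hxc.1])]
    rcases hedge with he | he <;> rw [he] <;> nlinarith [hxc.1, hxc.2]
  · rw [abs_of_nonpos (by linarith [hxc.2])]
    rcases hedge with he | he <;> rw [he] <;> nlinarith [hxc.1, hxc.2]

end Seg

theorem sphereGraph_split (μ : Mor k) {m : Fin k → ℕ} (hm : m ≤ μ.deg) :
    (sphereGraph k).split μ m = (μ.head m, μ.tail m) := by
  have := (sphereGraph k).split_eq_s3 (μ.s_head m) (μ.comp_head_tail m)
  rwa [show (sphereGraph k).d (μ.head m) = m from Mor.deg_head hm] at this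

theorem sphereGraph_seg (μ : Mor k) {m n : Fin k → ℕ} (hmn : m ≤ n) (hn : n ≤ μ.deg) :
    (sphereGraph k).seg μ m n = (μ.tail m).head (n - m) := by
  have hm := hmn.trans hn
  rw [KGraphOn.seg, sphereGraph_split μ hm, sphereGraph_split _ (by
    rw [Mor.deg_tail hm]; exact tsub_le_tsub_right hn m)]

theorem norm_sub_one_le_one_iff {x : Fin k → ℝ} :
    ‖x - 1‖ ≤ 1 ↔ ∀ i, x i ∈ Icc (0 : ℝ) 2 := by
  rw [pi_norm_le_iff_of_nonneg zero_le_one]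
  refine forall_congr' fun i => ?_
  rw [Pi.sub_apply, Pi.one_apply, Real.norm_eq_abs, abs_le, mem_Icc]
  constructor <;> rintro ⟨h₁, h₂⟩ <;> constructor <;> linarith

theorem isInterior_carrier_iff {x : Fin k → ℝ} (hx : ∀ i, x i ∈ Icc (0 : ℝ) 2) :
    IsInterior (fun i => carrier (x i)) ↔ ‖x - 1‖ < 1 := by
  rw [pi_norm_lt_iff one_pos]
  exact forall_congr' fun i => (isInner_carrier_iff (hx i)).trans (by simp [Real.norm_eq_abs])

/-- A point of the disjoint union of the cubes `{μ} × [0, d(μ)]`. -/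
abbrev Point (k : ℕ) : Type := Σ μ : Mor k, ↥(cube k ((sphereGraph k).d μ))

namespace Point

/-- The position in `[0, 2]^k`. -/
def pos (z : Point k) : Fin k → ℝ := fun i => Seg.pos (z.1.cell i) (z.2.1 i)

theorem coord_mem_Icc (z : Point k) (i : Fin k) : z.2.1 i ∈ Icc (0 : ℝ) (len (z.1.cell i)) :=
  ⟨z.2.2.1 i, z.2.2.2 i⟩

theorem pos_mem_Icc (z : Point k) (i : Fin k) : z.pos i ∈ Icc (0 : ℝ) 2 :=
  Seg.pos_mem_Icc (z.1.isSeg i) (z.coord_mem_Icc i)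

theorem seg_floor_ceil (z : Point k) :
    (sphereGraph k).seg z.1 (fun i => ⌊z.2.1 i⌋₊) (fun i => ⌈z.2.1 i⌉₊) =
      Mor.ofCell (fun i => carrier (z.pos i)) (fun i => isSeg_carrier (z.pos_mem_Icc i))
        z.1.sheet := by
  rw [sphereGraph_seg z.1 (fun i => Nat.floor_le_ceil _)
    (fun i => Nat.ceil_le.2 (z.coord_mem_Icc i).2)]
  exact Mor.ofCell_eq_ofCell_iff.2
    ⟨funext fun i => (carrier_pos (z.1.isSeg i) (z.coord_mem_Icc i)).symm, fun _ => rfl⟩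

theorem realRel_iff (z w : Point k) :
    realRel (sphereGraph k) z w ↔
      z.pos = w.pos ∧ (‖z.pos - 1‖ < 1 → z.1.sheet = w.1.sheet) := by
  have hfract (z : Point k) : (fun i => z.2.1 i - ⌊z.2.1 i⌋₊) =
      fun i => |z.pos i - far (carrier (z.pos i))| :=
    funext fun i => sub_floor_eq (z.1.isSeg i) (z.coord_mem_Icc i)
  rw [realRel, seg_floor_ceil, seg_floor_ceil, hfract, hfract, Mor.ofCell_eq_ofCell_iff,
    isInterior_carrier_iff z.pos_mem_Icc]
  constructor
  · rintro ⟨⟨hc, hsheet⟩, hd⟩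
    exact ⟨funext fun i => eq_of_carrier_eq (z.pos_mem_Icc i).1 (w.pos_mem_Icc i).1
      (congrFun hc i) (congrFun hd i), hsheet⟩
  · rintro ⟨hpos, hsheet⟩
    exact ⟨⟨by rw [hpos], hsheet⟩, by rw [hpos]⟩

theorem exists_pos_eq {x : Fin k → ℝ} (hx : ∀ i, x i ∈ Icc (0 : ℝ) 2) (b : Bool) :
    ∃ z : Point k, z.pos = x ∧ (‖x - 1‖ < 1 → z.1.sheet = b) := by
  refine ⟨⟨Mor.ofCell (fun i => carrier (x i)) (fun i => isSeg_carrier (hx i)) b,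
    ⟨fun i => |x i - far (carrier (x i))|,
      fun i => (abs_sub_far_carrier_mem_Icc (hx i).1).1,
      fun i => (abs_sub_far_carrier_mem_Icc (hx i).1).2⟩⟩,
    funext fun i => pos_carrier (hx i), fun h => ?_⟩
  simp [Mor.ofCell, (isInterior_carrier_iff hx).2 h]

theorem norm_pos_sub_one_le (z : Point k) : ‖z.pos - 1‖ ≤ 1 :=
  norm_sub_one_le_one_iff.2 z.pos_mem_Icc

theorem continuous_pos (μ : Mor k) :
    Continuous fun t : cube k ((sphereGraph k).d μ) => pos ⟨μ, t⟩ :=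
  continuous_pi fun i => by
    simp only [pos, Seg.pos]
    exact continuous_const.add
      (((continuous_apply i).comp continuous_subtype_val).mul continuous_const)

end Point

theorem nonempty_realisation_homeomorph (k : ℕ) :
    Nonempty (Realisation (sphereGraph k) ≃ₜ
      sphere (0 : EuclideanSpace ℝ (Fin (k + 1))) 1) := by
  obtain ⟨g, hg⟩ := (EuclideanSpace.equiv (Fin k) ℝ).symm.exists_homeomorph_norm_eq
  have hball (z : Point k) : ‖g (z.pos - 1)‖ ≤ 1 := (hg _).trans_le z.norm_pos_sub_one_le
  let f (z : Point k) : sphere (0 : EuclideanSpace ℝ (Fin (k + 1))) 1 :=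
    ⟨toHemisphere z.1.sheet (g (z.pos - 1)),
      mem_sphere_zero_iff_norm.2 (norm_toHemisphere _ (hball z))⟩
  refine Quotient.nonempty_homeomorph_of_fibres (realSetoid (sphereGraph k)) (f := f) ?_ ?_ ?_
  · refine continuous_sigma fun μ => Continuous.subtype_mk ?_ _
    exact (continuous_toHemisphere μ.sheet).comp
      (g.continuous.comp ((Point.continuous_pos μ).sub (continuous_const (y := 1))))
  · rintro ⟨y, hy⟩
    obtain ⟨b, w, hw, rfl⟩ := exists_toHemisphere_eq (mem_sphere_zero_iff_norm.1 hy)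
    have hx : ∀ i, (g.symm w + 1) i ∈ Icc (0 : ℝ) 2 :=
      norm_sub_one_le_one_iff.1 (by rwa [add_sub_cancel_right, ← hg, g.apply_symm_apply])
    obtain ⟨z, hz, hsheet⟩ := Point.exists_pos_eq hx b
    refine ⟨z, Subtype.ext ?_⟩
    simp only [f, hz, add_sub_cancel_right, Homeomorph.apply_symm_apply]
    exact (toHemisphere_eq_toHemisphere_iff hw).2
      ⟨rfl, fun h => hsheet (by rwa [add_sub_cancel_right, ← hg, g.apply_symm_apply])⟩
  · intro z w
    rw [Subtype.ext_iff, toHemisphere_eq_toHemisphere_iff (hball z), g.injective.eq_iff,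
      sub_left_inj, hg]
    exact (Point.realRel_iff z w).symm

end

end SphereGraph

theorem sphere_realised_general (k : ℕ) :
    ∃ (M : Type) (S : KGraphOn k M), Finite M ∧
      Nonempty (Realisation S ≃ₜ Metric.sphere (0 : EuclideanSpace ℝ (Fin (k + 1))) 1) :=
  ⟨SphereGraph.Mor k, SphereGraph.sphereGraph k, inferInstance,
    SphereGraph.nonempty_realisation_homeomorph k⟩

/-- for each `k ≥ 1` there is a finite `k`-graph whose topological realisation
is homeomorphic to the `k`-sphere. -/
theorem sphere_realised (k : ℕ) (hk : 1 ≤ k) :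
    ∃ (M : Type) (S : KGraphOn k M), Finite M ∧
      Nonempty (Realisation S ≃ₜ Metric.sphere (0 : EuclideanSpace ℝ (Fin (k + 1))) 1) :=
  sphere_realised_general k
end

section
/- For each n ≥ 1 and k ≥ 1 there is a finite k-graph whose topological realisation is homeomorphic to a wedge of n k-spheres, that is, to the quotient of the disjoint union of n copies of the k-sphere S^k obtained by identifying one chosen point from each copy to a single point. -/
open Classical

/-- The relation on `n` disjoint copies of the `k`-sphere identifying the chosen
points `p i` (one in each copy) with one another. -/
def wedgeRel (n k : ℕ)
    (p : Fin n → Metric.sphere (0 : EuclideanSpace ℝ (Fin (k + 1))) 1) :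
    (Fin n × Metric.sphere (0 : EuclideanSpace ℝ (Fin (k + 1))) 1) →
      (Fin n × Metric.sphere (0 : EuclideanSpace ℝ (Fin (k + 1))) 1) → Prop :=
  fun x y => x = y ∨ (x.2 = p x.1 ∧ y.2 = p y.1)


/-!
The 1-graph `v₀ ← v₁ → v₂` realises the interval `[0, 2]`, so its `k`-fold product realises the
cube `[0, 2]^k`. Take `n` copies of two such cubes and identify morphisms as their realisations
should be: those in the boundary of the cube lose their hemisphere label, and those at the corner
`0` also lose their copy label. Because no edge has its source at an end of the interval, this
identification is compatible with composition and factorisation, so the result is again a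
`k`-graph; its realisation is `n` doubled cubes, each glued along its boundary, glued together at
a corner. A homeomorphism of the cube onto the closed unit ball carrying the boundary onto the
unit sphere, followed by the lift to the upper or lower hemisphere, turns each doubled cube into
`S^k`. The resulting continuous bijection from the compact realisation onto the Hausdorff wedge is
a homeomorphism.
-/

open Set Metric

namespace KGraphOn

variable {k : ℕ} {M : Type} (S : KGraphOn k M)

theorem split_eq_of_comp {lam a b : M} (h : S.s a = S.r b) (hc : S.comp a b h = lam) :
    S.split lam (S.d a) = (a, b) := by
  have hex : ∃ p : M × M, ∃ hc : S.s p.1 = S.r p.2, S.d p.1 = S.d a ∧ S.comp p.1 p.2 hc = lam :=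
    ⟨(a, b), h, rfl, hc⟩
  rw [split, dif_pos hex]
  obtain ⟨hq, hdq, hcq⟩ := hex.choose_spec
  have hd : S.d lam = S.d a + S.d b := hc ▸ S.d_comp a b h
  have hdq₂ : S.d hex.choose.2 = S.d b := by
    have := S.d_comp _ _ hq
    rw [hcq, hdq, hd] at this
    exact (add_left_cancel this).symm
  exact (S.factor _ _ lam hd).unique ⟨hq, hdq, hdq₂, hcq⟩ ⟨h, rfl, rfl, hc⟩

end KGraphOn

theorem Quotient.nonempty_homeomorph_of_compact_of_t2 {X Y : Type*} [TopologicalSpace X]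
    [CompactSpace X] [TopologicalSpace Y] [T2Space Y] (r : Setoid X) {f : X → Y}
    (hf : Continuous f) (hsurj : Function.Surjective f) (hr : ∀ a b, r a b ↔ f a = f b) :
    Nonempty (Quotient r ≃ₜ Y) :=
  ⟨(Homeomorph.Quotient.congrRight hr).trans
    (Topology.IsQuotientMap.homeomorph (f := ⟨f, hf⟩) (hf.isClosedMap.isQuotientMap hf hsurj))⟩

instance {k : ℕ} (m : Fin k → ℕ) : CompactSpace (cube k m) :=
  isCompact_iff_compactSpace.mp isCompact_Icc

namespace WedgeOfSpheres

local notation "E" k:max => EuclideanSpace ℝ (Fin k)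

/-- Morphisms of the 1-graph `v₀ ←e₀— v₁ —e₂→ v₂`, realised as `[0, 2]` with `v₁` at `1`. -/
inductive IntervalMor
  | v₀ | v₁ | v₂ | e₀ | e₂
  deriving DecidableEq

namespace IntervalMor

instance : Fintype IntervalMor := ⟨{v₀, v₁, v₂, e₀, e₂}, fun t => by cases t <;> decide⟩

def d : IntervalMor → ℕ
  | e₀ | e₂ => 1
  | _ => 0

def r : IntervalMor → IntervalMor
  | e₀ => v₀
  | e₂ => v₂
  | t => t

def s : IntervalMor → IntervalMor
  | e₀ | e₂ => v₁
  | t => t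

def comp : IntervalMor → IntervalMor → IntervalMor
  | _, e₀ => e₀
  | _, e₂ => e₂
  | a, _ => a

def head (t : IntervalMor) (m : ℕ) : IntervalMor := if m = 0 then t.r else t

def tail (t : IntervalMor) (m : ℕ) : IntervalMor := if m = 0 then t.s else t

def IsEnd (t : IntervalMor) : Prop := t = v₀ ∨ t = v₂

instance : DecidablePred IsEnd := fun t => by unfold IsEnd; infer_instance

/-- Reshaping a coordinate from `a` to `b` never recovers data that `Mor.of` forgets. -/
def Refines (a b : IntervalMor) : Prop := (a = v₀ → b = v₀) ∧ (IsEnd a → IsEnd b)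

instance : DecidableRel Refines := fun a b => by unfold Refines; infer_instance

theorem d_r (a : IntervalMor) : a.r.d = 0 := by cases a <;> rfl
theorem d_s (a : IntervalMor) : a.s.d = 0 := by cases a <;> rfl
theorem s_r (a : IntervalMor) : a.r.s = a.r := by cases a <;> rfl
theorem r_r (a : IntervalMor) : a.r.r = a.r := by cases a <;> rfl
theorem r_s (a : IntervalMor) : a.s.r = a.s := by cases a <;> rfl
theorem s_s (a : IntervalMor) : a.s.s = a.s := by cases a <;> rfl
theorem comp_r (a : IntervalMor) : a.r.comp a = a := by cases a <;> rfl
theorem comp_s (a : IntervalMor) : a.comp a.s = a := by cases a <;> rfl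

variable {a b c : IntervalMor}

theorem r_comp (h : a.s = b.r) : (a.comp b).r = a.r := by revert a b; decide
theorem s_comp (h : a.s = b.r) : (a.comp b).s = b.s := by revert a b; decide
theorem d_comp (h : a.s = b.r) : (a.comp b).d = a.d + b.d := by revert a b; decide
theorem comp_assoc : (a.comp b).comp c = a.comp (b.comp c) := by revert a b c; decide

theorem head_tail_of_d_eq {t : IntervalMor} {m m' : ℕ} (h : t.d = m + m') :
    (t.head m).s = (t.tail m').r ∧ (t.head m).d = m ∧ (t.tail m').d = m' ∧
      (t.head m).comp (t.tail m') = t := by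
  have hm : m ≤ 1 := by cases t <;> simp [d] at h <;> omega
  have hm' : m' ≤ 1 := by cases t <;> simp [d] at h <;> omega
  interval_cases m <;> interval_cases m' <;> cases t <;> simp_all [d, head, tail, r, s, comp]

theorem head_comp_eq (h : a.s = b.r) : (a.comp b).head a.d = a := by revert a b; decide
theorem tail_comp_eq (h : a.s = b.r) : (a.comp b).tail b.d = b := by revert a b; decide

theorem Refines.refl (a : IntervalMor) : a.Refines a := by cases a <;> decide
theorem Refines.trans (hab : a.Refines b) (hbc : b.Refines c) : a.Refines c :=
  ⟨hbc.1 ∘ hab.1, hbc.2 ∘ hab.2⟩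
theorem refines_r (a : IntervalMor) : a.Refines a.r := by cases a <;> decide
theorem refines_s (a : IntervalMor) : a.Refines a.s := by cases a <;> decide
theorem s_refines (a : IntervalMor) : a.s.Refines a := by cases a <;> decide
theorem refines_head (a : IntervalMor) (m : ℕ) : a.Refines (a.head m) := by
  unfold head; split_ifs
  exacts [refines_r a, Refines.refl a]
theorem comp_refines_left (h : a.s = b.r) : (a.comp b).Refines a := by revert a b; decide
theorem comp_refines_right (h : a.s = b.r) : (a.comp b).Refines b := by revert a b; decide
theorem refines_comp (h : a.s = b.r) : b.Refines (a.comp b) := by revert a b; decide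

noncomputable def pos : IntervalMor → ℝ → ℝ
  | v₀, _ => 0
  | v₁, _ => 1
  | v₂, _ => 2
  | e₀, u => u
  | e₂, u => 2 - u

/-- `ofPos x` is the morphism whose open cell in `[0, 2]` contains `x`, and `fracOfPos x` is the
coordinate of `x` in that cell. -/
noncomputable def ofPos (x : ℝ) : IntervalMor :=
  if x = 0 then v₀ else if x < 1 then e₀ else if x = 1 then v₁ else if x < 2 then e₂ else v₂

noncomputable def fracOfPos (x : ℝ) : ℝ :=
  if x < 1 then x else if x = 1 then 0 else if x < 2 then 2 - x else 0

theorem continuous_pos (t : IntervalMor) : Continuous t.pos := by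
  cases t
  exacts [continuous_const, continuous_const, continuous_const, continuous_id,
    continuous_const.sub continuous_id]

theorem pos_mem_Icc {t : IntervalMor} {u : ℝ} (hu : u ∈ Icc 0 (t.d : ℝ)) : t.pos u ∈ Icc 0 2 := by
  obtain ⟨h0, h1⟩ := hu
  cases t <;> simp only [pos, d, Nat.cast_zero, Nat.cast_one] at h1 ⊢ <;> constructor <;> linarith

theorem pos_ofPos {x : ℝ} (hx : x ∈ Icc 0 2) : (ofPos x).pos (fracOfPos x) = x := by
  obtain ⟨h0, h2⟩ := hx
  unfold ofPos fracOfPos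
  split_ifs <;> simp only [pos] <;> linarith

theorem ofPos_eq_v₀_iff {x : ℝ} : ofPos x = v₀ ↔ x = 0 := by
  unfold ofPos
  split_ifs <;> simp_all

theorem isEnd_ofPos_iff {x : ℝ} (hx : x ∈ Icc 0 2) : IsEnd (ofPos x) ↔ x = 0 ∨ x = 2 := by
  obtain ⟨h0, h2⟩ := hx
  unfold ofPos IsEnd
  split_ifs <;> simp only [or_false, false_or, or_self, false_iff, true_iff, not_or] <;> grind

theorem exists_pos_eq {x : ℝ} (hx : x ∈ Icc 0 2) :
    ∃ t : IntervalMor, t.d = 1 ∧ ∃ u ∈ Icc (0 : ℝ) 1, t.pos u = x := by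
  obtain ⟨h0, h2⟩ := hx
  rcases le_total x 1 with h | h
  · exact ⟨e₀, rfl, x, ⟨h0, h⟩, rfl⟩
  · exact ⟨e₂, rfl, 2 - x, ⟨by linarith, by linarith⟩, by simp [pos]⟩

theorem head_tail_floor_ceil {t : IntervalMor} {u : ℝ} (hu : u ∈ Icc 0 (t.d : ℝ)) :
    (t.tail (t.d - ⌊u⌋₊)).head (⌈u⌉₊ - ⌊u⌋₊) = ofPos (t.pos u) ∧
      u - ⌊u⌋₊ = fracOfPos (t.pos u) := by
  obtain ⟨h0, h1⟩ := hu
  have hu : u = 0 ∨ u = 1 ∨ (0 < u ∧ u < 1) := by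
    have h1' : u ≤ 1 := h1.trans (by cases t <;> simp [d])
    rcases h0.eq_or_lt with h | h
    · exact Or.inl h.symm
    rcases h1'.eq_or_lt with h' | h'
    exacts [Or.inr (Or.inl h'), Or.inr (Or.inr ⟨h, h'⟩)]
  rcases hu with rfl | rfl | ⟨hu0, hu1⟩
  · cases t <;> norm_num [ofPos, fracOfPos, pos, d, head, tail, r, s]
  · cases t <;> norm_num [d] at h1 <;> norm_num [ofPos, fracOfPos, pos, head, tail, r, s, d]
  · have hfl : ⌊u⌋₊ = 0 := Nat.floor_eq_zero.mpr hu1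
    have hcl : ⌈u⌉₊ = 1 := by rw [Nat.ceil_eq_iff one_ne_zero]; norm_num [hu0, hu1.le]
    rw [hfl, hcl]
    cases t <;> norm_num [d] at h1 ⊢
    any_goals linarith
    · simp [head, tail, pos, ofPos, fracOfPos, hu0.ne', hu1]
    · have h₁ : ¬ 2 - u < 1 := by linarith
      have h₂ : 2 - u ≠ 1 := by linarith
      have h₃ : 2 - u ≠ 0 := by linarith
      simp [head, tail, pos, ofPos, fracOfPos, h₁, h₂, h₃, hu0]

end IntervalMor

open IntervalMor

section Shapes

variable {k : ℕ}

def IsCorner (t : Fin k → IntervalMor) : Prop := ∀ j, t j = v₀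

def OnFace (t : Fin k → IntervalMor) : Prop := ∃ j, (t j).IsEnd

instance : DecidablePred (IsCorner (k := k)) := fun t => by unfold IsCorner; infer_instance

instance : DecidablePred (OnFace (k := k)) := fun t => by unfold OnFace; infer_instance

variable {t t' : Fin k → IntervalMor}

theorem IsCorner.of_refines (h : ∀ j, (t j).Refines (t' j)) (ht : IsCorner t) : IsCorner t' :=
  fun j => (h j).1 (ht j)

theorem OnFace.of_refines (h : ∀ j, (t j).Refines (t' j)) (ht : OnFace t) : OnFace t' :=
  let ⟨j, hj⟩ := ht
  ⟨j, (h j).2 hj⟩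

end Shapes

/-- A morphism of the `k`-graph: a morphism `shape` of the `k`-fold product of the interval graph,
placed in sphere number `copy` on hemisphere `sheet`. The copy is forgotten at the base corner and
the hemisphere on the boundary of the cube; forgotten data is normalised to `0` and `false`. -/
@[ext]
structure Mor (n k : ℕ) where
  copy : Fin n
  shape : Fin k → IntervalMor
  sheet : Bool
  copy_eq : IsCorner shape → copy.val = 0
  sheet_eq : OnFace shape → sheet = false

namespace Mor

variable {n k : ℕ}

instance : Finite (Mor n k) :=
  Finite.of_injective (fun μ => (μ.copy, μ.shape, μ.sheet)) fun μ ν h => by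
    simp only [Prod.mk.injEq] at h
    exact Mor.ext h.1 h.2.1 h.2.2

def of (c : Fin n) (t : Fin k → IntervalMor) (b : Bool) : Mor n k where
  copy := if IsCorner t then ⟨0, c.pos⟩ else c
  shape := t
  sheet := if OnFace t then false else b
  copy_eq h := by simp [h]
  sheet_eq h := by simp [h]

theorem of_eq_of_iff {c c' : Fin n} {t t' : Fin k → IntervalMor} {b b' : Bool} :
    of c t b = of c' t' b' ↔ t = t' ∧ (IsCorner t ∨ c = c') ∧ (OnFace t ∨ b = b') := by
  constructor
  · intro h
    obtain rfl : t = t' := congrArg shape h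
    have hc := congrArg copy h
    have hb := congrArg sheet h
    by_cases hz : IsCorner t <;> by_cases hf : OnFace t <;> simp_all [of]
  · rintro ⟨rfl, hc, hb⟩
    ext1
    · by_cases hz : IsCorner t <;> simp_all [of]
    · rfl
    · by_cases hf : OnFace t <;> simp_all [of]

theorem of_copy_shape_sheet (μ : Mor n k) : of μ.copy μ.shape μ.sheet = μ := by
  ext1
  · by_cases hz : IsCorner μ.shape
    · simp only [of, if_pos hz]; exact Fin.ext (μ.copy_eq hz).symm
    · simp [of, hz]
  · rfl
  · by_cases hf : OnFace μ.shape
    · simp [of, hf, μ.sheet_eq hf]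
    · simp [of, hf]

theorem copy_of_of_not_isCorner {c : Fin n} {t : Fin k → IntervalMor} (b : Bool)
    (h : ¬ IsCorner t) : (of c t b).copy = c := by simp [of, h]

theorem sheet_of_of_not_onFace (c : Fin n) {t : Fin k → IntervalMor} {b : Bool}
    (h : ¬ OnFace t) : (of c t b).sheet = b := by simp [of, h]

def withShape (μ : Mor n k) (t : Fin k → IntervalMor) : Mor n k := of μ.copy t μ.sheet

@[simp]
theorem shape_withShape (μ : Mor n k) (t : Fin k → IntervalMor) : (μ.withShape t).shape = t := rfl

theorem withShape_shape (μ : Mor n k) : μ.withShape μ.shape = μ := of_copy_shape_sheet μ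

theorem withShape_eq_withShape_iff {μ ν : Mor n k} {t t' : Fin k → IntervalMor} :
    μ.withShape t = ν.withShape t' ↔
      t = t' ∧ (IsCorner t ∨ μ.copy = ν.copy) ∧ (OnFace t ∨ μ.sheet = ν.sheet) :=
  of_eq_of_iff

theorem withShape_withShape {μ : Mor n k} {t t' : Fin k → IntervalMor}
    (h : ∀ j, (t j).Refines (t' j)) : (μ.withShape t).withShape t' = μ.withShape t' := by
  refine withShape_eq_withShape_iff.mpr ⟨rfl, ?_, ?_⟩
  · by_cases hz : IsCorner t
    exacts [Or.inl (hz.of_refines h), Or.inr (copy_of_of_not_isCorner _ hz)]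
  · by_cases hf : OnFace t
    exacts [Or.inl (hf.of_refines h), Or.inr (sheet_of_of_not_onFace _ hf)]

theorem withShape_congr {μ ν : Mor n k} {t t' : Fin k → IntervalMor}
    (h : ∀ j, (t j).Refines (t' j)) (he : μ.withShape t = ν.withShape t) :
    μ.withShape t' = ν.withShape t' := by
  rw [← withShape_withShape (μ := μ) h, he, withShape_withShape h]

def d (μ : Mor n k) : Fin k → ℕ := fun j => (μ.shape j).d

def r (μ : Mor n k) : Mor n k := μ.withShape fun j => (μ.shape j).r

def s (μ : Mor n k) : Mor n k := μ.withShape fun j => (μ.shape j).s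

def comp (μ ν : Mor n k) : Mor n k := ν.withShape fun j => (μ.shape j).comp (ν.shape j)

variable {μ ν ρ : Mor n k}

theorem shape_s_eq_shape_r (h : μ.s = ν.r) (j : Fin k) : (μ.shape j).s = (ν.shape j).r :=
  congrFun (congrArg shape h) j

theorem withShape_eq_of_s_eq_r (h : μ.s = ν.r) {t : Fin k → IntervalMor}
    (ht : ∀ j, (μ.shape j).s.Refines (t j)) : μ.withShape t = ν.withShape t :=
  withShape_congr ht <| h.trans <| congrArg ν.withShape <| funext fun j =>
    (shape_s_eq_shape_r h j).symm

theorem d_r (μ : Mor n k) : μ.r.d = 0 := funext fun _ => IntervalMor.d_r _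

theorem d_s (μ : Mor n k) : μ.s.d = 0 := funext fun _ => IntervalMor.d_s _

theorem s_r (μ : Mor n k) : μ.r.s = μ.r := by
  unfold r s
  rw [shape_withShape, withShape_withShape fun _ => refines_s _]
  simp only [IntervalMor.s_r]

theorem r_r (μ : Mor n k) : μ.r.r = μ.r := by
  unfold r
  rw [shape_withShape, withShape_withShape fun _ => refines_r _]
  simp only [IntervalMor.r_r]

theorem r_s (μ : Mor n k) : μ.s.r = μ.s := by
  unfold r s
  rw [shape_withShape, withShape_withShape fun _ => refines_r _]
  simp only [IntervalMor.r_s]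

theorem s_s (μ : Mor n k) : μ.s.s = μ.s := by
  unfold s
  rw [shape_withShape, withShape_withShape fun _ => refines_s _]
  simp only [IntervalMor.s_s]

theorem r_comp (h : μ.s = ν.r) : (μ.comp ν).r = μ.r := by
  unfold r comp
  rw [shape_withShape, withShape_withShape fun _ => refines_r _]
  simp only [IntervalMor.r_comp (shape_s_eq_shape_r h _)]
  exact (withShape_eq_of_s_eq_r h fun j => (s_refines _).trans (refines_r _)).symm

theorem s_comp (h : μ.s = ν.r) : (μ.comp ν).s = ν.s := by
  unfold s comp
  rw [shape_withShape, withShape_withShape fun _ => refines_s _]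
  simp only [IntervalMor.s_comp (shape_s_eq_shape_r h _)]

theorem d_comp (h : μ.s = ν.r) : (μ.comp ν).d = μ.d + ν.d :=
  funext fun j => IntervalMor.d_comp (shape_s_eq_shape_r h j)

theorem r_comp_self (μ : Mor n k) : μ.r.comp μ = μ := by
  unfold comp r
  simp only [shape_withShape, IntervalMor.comp_r]
  exact withShape_shape μ

theorem comp_s_self (μ : Mor n k) : μ.comp μ.s = μ := by
  unfold comp s
  simp only [shape_withShape, IntervalMor.comp_s]
  rw [withShape_withShape fun _ => s_refines _, withShape_shape]

theorem comp_assoc (h₁ : μ.s = ν.r) (h₂ : ν.s = ρ.r) :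
    (μ.comp ν).comp ρ = μ.comp (ν.comp ρ) := by
  have h₃ : ∀ j, (μ.shape j).s = ((ν.shape j).comp (ρ.shape j)).r := fun j => by
    rw [IntervalMor.r_comp (shape_s_eq_shape_r h₂ j)]; exact shape_s_eq_shape_r h₁ j
  unfold comp
  simp only [shape_withShape, IntervalMor.comp_assoc]
  rw [withShape_withShape fun j => refines_comp (h₃ j)]

def head (μ : Mor n k) (m : Fin k → ℕ) : Mor n k := μ.withShape fun j => (μ.shape j).head (m j)

def tail (μ : Mor n k) (m : Fin k → ℕ) : Mor n k := μ.withShape fun j => (μ.shape j).tail (m j)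

theorem head_tail_of_d_eq {m m' : Fin k → ℕ} (hd : μ.d = m + m') :
    (μ.head m).s = (μ.tail m').r ∧
      (μ.head m).d = m ∧ (μ.tail m').d = m' ∧ (μ.head m).comp (μ.tail m') = μ := by
  have H j := IntervalMor.head_tail_of_d_eq (congrFun hd j)
  refine ⟨?_, funext fun j => (H j).2.1, funext fun j => (H j).2.2.1, ?_⟩
  · unfold head tail r s
    rw [shape_withShape, shape_withShape, withShape_withShape fun _ => refines_s _,
      withShape_withShape fun _ => refines_r _]
    simp only [(H _).1]
  · unfold head tail comp
    simp only [shape_withShape, (H _).2.2.2]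
    rw [withShape_withShape fun j => ?_, withShape_shape]
    unfold IntervalMor.tail
    split_ifs
    exacts [s_refines _, Refines.refl _]

theorem eq_head_tail_of_comp_eq (h : μ.s = ν.r) :
    (μ.comp ν).head μ.d = μ ∧ (μ.comp ν).tail ν.d = ν := by
  have hs := shape_s_eq_shape_r h
  unfold head tail comp
  simp only [shape_withShape, d, IntervalMor.head_comp_eq (hs _), IntervalMor.tail_comp_eq (hs _)]
  rw [withShape_withShape fun j => comp_refines_left (hs j),
    withShape_withShape fun j => comp_refines_right (hs j)]
  exact ⟨(withShape_eq_of_s_eq_r h fun _ => s_refines _).symm.trans (withShape_shape μ),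
    withShape_shape ν⟩

end Mor

def wedgeGraph (n k : ℕ) : KGraphOn k (Mor n k) where
  countable := inferInstance
  d := Mor.d
  r := Mor.r
  s := Mor.s
  comp μ ν _ := μ.comp ν
  d_r := Mor.d_r
  d_s := Mor.d_s
  s_r := Mor.s_r
  r_r := Mor.r_r
  r_s := Mor.r_s
  s_s := Mor.s_s
  r_comp _ _ := Mor.r_comp
  s_comp _ _ := Mor.s_comp
  d_comp _ _ := Mor.d_comp
  id_comp := Mor.r_comp_self
  comp_id := Mor.comp_s_self
  assoc _ _ _ := Mor.comp_assoc
  factor m m' lam hd := by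
    obtain ⟨h, hm, hm', hc⟩ := lam.head_tail_of_d_eq hd
    refine ⟨(lam.head m, lam.tail m'), ⟨h, hm, hm', hc⟩, ?_⟩
    rintro ⟨μ, ν⟩ ⟨h', rfl, rfl, rfl⟩
    obtain ⟨e₁, e₂⟩ := Mor.eq_head_tail_of_comp_eq h'
    rw [e₁, e₂]

section Realisation

variable {n k : ℕ}

theorem split_wedgeGraph {μ : Mor n k} {m : Fin k → ℕ} (hm : m ≤ μ.d) :
    (wedgeGraph n k).split μ m = (μ.head m, μ.tail (μ.d - m)) := by
  obtain ⟨h, hd, -, hc⟩ := μ.head_tail_of_d_eq (m := m) (m' := μ.d - m)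
    (funext fun j => (Nat.add_sub_of_le (hm j)).symm)
  have := (wedgeGraph n k).split_eq_of_comp h hc
  rwa [show (wedgeGraph n k).d (μ.head m) = m from hd] at this

theorem seg_wedgeGraph {μ : Mor n k} {m m' : Fin k → ℕ} (hm : m ≤ m') (hm' : m' ≤ μ.d) :
    (wedgeGraph n k).seg μ m m' =
      μ.withShape fun j => ((μ.shape j).tail (μ.d j - m j)).head (m' j - m j) := by
  obtain ⟨-, -, hd, -⟩ := μ.head_tail_of_d_eq (m := m) (m' := μ.d - m)
    (funext fun j => (Nat.add_sub_of_le ((hm.trans hm') j)).symm)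
  have hle : m' - m ≤ (μ.tail (μ.d - m)).d := by rw [hd]; exact tsub_le_tsub_right hm' m
  rw [KGraphOn.seg, split_wedgeGraph (hm.trans hm'), split_wedgeGraph hle]
  exact Mor.withShape_withShape fun _ => refines_head _ _

def OnCubeBoundary (x : Fin k → ℝ) : Prop := ∃ j, x j = 0 ∨ x j = 2

/-- The gluing of `n` copies of two cubes `[0, 2]^k` (labelled by `Bool`): the two cubes of a copy
along their boundary, and all copies at the corner `0`. -/
def DoubledCubeRel (c : Fin n) (x : Fin k → ℝ) (b : Bool) (c' : Fin n) (x' : Fin k → ℝ)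
    (b' : Bool) : Prop :=
  x = x' ∧ (x = 0 ∨ c = c') ∧ (OnCubeBoundary x ∨ b = b')

theorem isCorner_ofPos_iff {p : Fin k → ℝ} : IsCorner (fun j => ofPos (p j)) ↔ p = 0 := by
  simp [IsCorner, ofPos_eq_v₀_iff, funext_iff]

theorem onFace_ofPos_iff {p : Fin k → ℝ} (hp : p ∈ Icc 0 2) :
    OnFace (fun j => ofPos (p j)) ↔ OnCubeBoundary p :=
  exists_congr fun j => isEnd_ofPos_iff ⟨hp.1 j, hp.2 j⟩

theorem ofPos_fracOfPos_inj {p q : Fin k → ℝ} (hp : p ∈ Icc 0 2) (hq : q ∈ Icc 0 2) :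
    ((fun j => ofPos (p j)) = (fun j => ofPos (q j)) ∧
      (fun j => fracOfPos (p j)) = (fun j => fracOfPos (q j))) ↔ p = q := by
  refine ⟨fun ⟨h₁, h₂⟩ => funext fun j => ?_, fun h => h ▸ ⟨rfl, rfl⟩⟩
  rw [← pos_ofPos ⟨hp.1 j, hp.2 j⟩, ← pos_ofPos ⟨hq.1 j, hq.2 j⟩, congrFun h₁ j, congrFun h₂ j]

variable (n k) in
abbrev Cell : Type := Σ μ : Mor n k, cube k ((wedgeGraph n k).d μ)

namespace Cell

noncomputable def pos (x : Cell n k) : Fin k → ℝ := fun j => (x.1.shape j).pos (x.2.1 j)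

theorem coord_mem_Icc (x : Cell n k) (j : Fin k) : x.2.1 j ∈ Icc 0 ((x.1.shape j).d : ℝ) :=
  ⟨x.2.2.1 j, x.2.2.2 j⟩

theorem pos_mem_Icc (x : Cell n k) : x.pos ∈ Icc 0 2 :=
  ⟨fun j => (IntervalMor.pos_mem_Icc (x.coord_mem_Icc j)).1,
    fun j => (IntervalMor.pos_mem_Icc (x.coord_mem_Icc j)).2⟩

theorem seg_floor_ceil (x : Cell n k) :
    (wedgeGraph n k).seg x.1 (fun i => ⌊x.2.1 i⌋₊) (fun i => ⌈x.2.1 i⌉₊) =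
      x.1.withShape fun j => ofPos (x.pos j) := by
  rw [seg_wedgeGraph (fun j => Nat.floor_le_ceil _)
    (fun j => Nat.ceil_le.mpr (x.coord_mem_Icc j).2)]
  exact congrArg x.1.withShape (funext fun j => (head_tail_floor_ceil (x.coord_mem_Icc j)).1)

theorem sub_floor (x : Cell n k) :
    (fun i => x.2.1 i - (⌊x.2.1 i⌋₊ : ℝ)) = fun j => fracOfPos (x.pos j) :=
  funext fun j => (head_tail_floor_ceil (x.coord_mem_Icc j)).2

theorem realRel_iff (x y : Cell n k) :
    realRel (wedgeGraph n k) x y ↔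
      DoubledCubeRel x.1.copy x.pos x.1.sheet y.1.copy y.pos y.1.sheet := by
  have hx := x.pos_mem_Icc
  unfold realRel
  rw [x.seg_floor_ceil, y.seg_floor_ceil, x.sub_floor, y.sub_floor,
    Mor.withShape_eq_withShape_iff, isCorner_ofPos_iff, onFace_ofPos_iff hx, DoubledCubeRel,
    ← ofPos_fracOfPos_inj hx y.pos_mem_Icc]
  tauto

end Cell

end Realisation

section Geometry

variable {k : ℕ}

theorem exists_homeomorph_cube_ball (k : ℕ) :
    ∃ h : E k ≃ₜ E k,
      h '' ((EuclideanSpace.equiv (Fin k) ℝ) ⁻¹' pi univ fun _ => Ioo 0 2) = ball 0 1 ∧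
      h '' ((EuclideanSpace.equiv (Fin k) ℝ) ⁻¹' Icc 0 2) = closedBall 0 1 := by
  set e := EuclideanSpace.equiv (Fin k) ℝ
  have hint : interior (e ⁻¹' Icc 0 2) = e ⁻¹' pi univ fun _ => Ioo 0 2 := by
    refine (e.toHomeomorph.preimage_interior _).symm.trans ?_
    rw [← pi_univ_Icc, interior_pi_set finite_univ]
    simp only [interior_Icc]
    rfl
  have hcl : closure (e ⁻¹' Icc 0 2) = e ⁻¹' Icc 0 2 :=
    (isClosed_Icc.preimage e.continuous).closure_eq
  obtain ⟨h, h₁, h₂, -⟩ := exists_homeomorph_image_interior_closure_frontier_eq_unitBall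
    ((convex_Icc 0 2).linear_preimage e.toLinearMap)
    (hint ▸ ⟨e.symm 1, by simp⟩)
    (e.toHomeomorph.isCompact_preimage.mpr isCompact_Icc).isBounded
  exact ⟨h, hint ▸ h₁, hcl ▸ h₂⟩

noncomputable def cubeHomeomorph (k : ℕ) : E k ≃ₜ E k := (exists_homeomorph_cube_ball k).choose

theorem image_cubeHomeomorph_pi_Ioo :
    cubeHomeomorph k '' ((EuclideanSpace.equiv (Fin k) ℝ) ⁻¹' pi univ fun _ => Ioo 0 2) =
      ball 0 1 :=
  (exists_homeomorph_cube_ball k).choose_spec.1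

theorem image_cubeHomeomorph_Icc :
    cubeHomeomorph k '' ((EuclideanSpace.equiv (Fin k) ℝ) ⁻¹' Icc 0 2) = closedBall 0 1 :=
  (exists_homeomorph_cube_ball k).choose_spec.2

noncomputable def cubeToBall (x : Fin k → ℝ) : E k :=
  cubeHomeomorph k ((EuclideanSpace.equiv (Fin k) ℝ).symm x)

theorem continuous_cubeToBall : Continuous (cubeToBall (k := k)) :=
  (cubeHomeomorph k).continuous.comp (EuclideanSpace.equiv (Fin k) ℝ).symm.continuous

theorem cubeToBall_injective : Function.Injective (cubeToBall (k := k)) :=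
  (cubeHomeomorph k).injective.comp (EuclideanSpace.equiv (Fin k) ℝ).symm.injective

theorem cubeToBall_mem_ball_iff {x : Fin k → ℝ} :
    cubeToBall x ∈ ball 0 1 ↔ ∀ j, x j ∈ Ioo 0 2 := by
  rw [cubeToBall, ← image_cubeHomeomorph_pi_Ioo, (cubeHomeomorph k).injective.mem_set_image]
  simp

theorem image_cubeToBall_Icc : cubeToBall '' Icc (0 : Fin k → ℝ) 2 = closedBall 0 1 := by
  rw [← image_cubeHomeomorph_Icc, ← ContinuousLinearEquiv.image_symm_eq_preimage, image_image]
  rfl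

theorem norm_cubeToBall_le {x : Fin k → ℝ} (hx : x ∈ Icc 0 2) : ‖cubeToBall x‖ ≤ 1 :=
  mem_closedBall_zero_iff.mp (image_cubeToBall_Icc ▸ mem_image_of_mem _ hx)

theorem norm_cubeToBall_eq_one_iff {x : Fin k → ℝ} (hx : x ∈ Icc 0 2) :
    ‖cubeToBall x‖ = 1 ↔ OnCubeBoundary x := by
  rw [← not_iff_not, ← Ne, ← (norm_cubeToBall_le hx).lt_iff_ne, ← mem_ball_zero_iff,
    cubeToBall_mem_ball_iff, OnCubeBoundary, not_exists]
  refine forall_congr' fun j => ?_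
  rw [mem_Ioo, not_or]
  exact ⟨fun h => ⟨h.1.ne', h.2.ne⟩,
    fun h => ⟨(hx.1 j).lt_of_ne' h.1, (hx.2 j).lt_of_ne h.2⟩⟩

end Geometry

section Hemisphere

variable {k : ℕ}

theorem norm_sq_toLp_snoc (w : E k) (a : ℝ) :
    ‖(WithLp.toLp 2 (Fin.snoc (α := fun _ => ℝ) w.ofLp a) : E (k + 1))‖ ^ 2 = ‖w‖ ^ 2 + a ^ 2 := by
  simp [EuclideanSpace.norm_sq_eq, Fin.sum_univ_castSucc]

noncomputable def hemisphereLift (w : E k) (b : Bool) : E (k + 1) :=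
  WithLp.toLp 2 (Fin.snoc (α := fun _ => ℝ) w.ofLp ((if b then -1 else 1) * √(1 - ‖w‖ ^ 2)))

theorem norm_hemisphereLift {w : E k} (hw : ‖w‖ ≤ 1) (b : Bool) : ‖hemisphereLift w b‖ = 1 := by
  have h := norm_sq_toLp_snoc w ((if b then -1 else 1) * √(1 - ‖w‖ ^ 2))
  rw [mul_pow, Real.sq_sqrt (by nlinarith [norm_nonneg w])] at h
  rw [← pow_eq_one_iff_of_nonneg (norm_nonneg _) two_ne_zero, hemisphereLift, h]
  cases b <;> simp

theorem continuous_hemisphereLift (b : Bool) : Continuous fun w : E k => hemisphereLift w b := by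
  unfold hemisphereLift
  fun_prop

theorem hemisphereLift_eq_iff {w w' : E k} {b b' : Bool} (hw : ‖w‖ ≤ 1) :
    hemisphereLift w b = hemisphereLift w' b' ↔ w = w' ∧ (‖w‖ = 1 ∨ b = b') := by
  constructor
  · intro h
    have hw' : w = w' := by
      ext j
      simpa [hemisphereLift] using congrArg (· (Fin.castSucc j)) h
    subst hw'
    refine ⟨rfl, or_iff_not_imp_left.mpr fun hne => ?_⟩
    have hpos : 0 < √(1 - ‖w‖ ^ 2) :=
      Real.sqrt_pos.mpr (by nlinarith [norm_nonneg w, hw.lt_of_ne hne])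
    have := congrArg (· (Fin.last k)) h
    cases b <;> cases b' <;> simp [hemisphereLift] at this ⊢ <;> linarith
  · rintro ⟨rfl, h | rfl⟩
    · simp [hemisphereLift, h]
    · rfl

theorem exists_hemisphereLift_eq {z : E (k + 1)} (hz : ‖z‖ = 1) :
    ∃ w : E k, ‖w‖ ≤ 1 ∧ ∃ b, hemisphereLift w b = z := by
  set w : E k := WithLp.toLp 2 (Fin.init z.ofLp)
  have hz' : z = WithLp.toLp 2 (Fin.snoc (α := fun _ => ℝ) w.ofLp (z (Fin.last k))) := by
    simp [w, Fin.snoc_init_self]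
  have hnorm := norm_sq_toLp_snoc w (z (Fin.last k))
  rw [← hz', hz] at hnorm
  refine ⟨w, ?_, decide (z (Fin.last k) < 0), ?_⟩
  · nlinarith [norm_nonneg w, sq_nonneg (z (Fin.last k))]
  · conv_rhs => rw [hz']
    rw [hemisphereLift, show 1 - ‖w‖ ^ 2 = z (Fin.last k) ^ 2 by linarith, Real.sqrt_sq_eq_abs]
    congr 2
    by_cases h : z (Fin.last k) < 0
    · simp [h, abs_of_neg h]
    · simp [h, abs_of_nonneg (not_lt.mp h)]

end Hemisphere

section Sphere

variable {k : ℕ}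

noncomputable def toSphere (x : Fin k → ℝ) (b : Bool) : E (k + 1) := hemisphereLift (cubeToBall x) b

theorem norm_toSphere {x : Fin k → ℝ} (hx : x ∈ Icc 0 2) (b : Bool) : ‖toSphere x b‖ = 1 :=
  norm_hemisphereLift (norm_cubeToBall_le hx) b

theorem continuous_toSphere (b : Bool) : Continuous fun x : Fin k → ℝ => toSphere x b :=
  (continuous_hemisphereLift b).comp continuous_cubeToBall

theorem toSphere_eq_iff {x x' : Fin k → ℝ} {b b' : Bool} (hx : x ∈ Icc 0 2) :
    toSphere x b = toSphere x' b' ↔ x = x' ∧ (OnCubeBoundary x ∨ b = b') := by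
  rw [toSphere, toSphere, hemisphereLift_eq_iff (norm_cubeToBall_le hx),
    cubeToBall_injective.eq_iff, norm_cubeToBall_eq_one_iff hx]

theorem exists_toSphere_eq {z : E (k + 1)} (hz : ‖z‖ = 1) :
    ∃ x ∈ Icc (0 : Fin k → ℝ) 2, ∃ b, toSphere x b = z := by
  obtain ⟨w, hw, b, rfl⟩ := exists_hemisphereLift_eq hz
  obtain ⟨x, hx, rfl⟩ : w ∈ cubeToBall '' Icc 0 2 := by
    rwa [image_cubeToBall_Icc, mem_closedBall_zero_iff]
  exact ⟨x, hx, b, rfl⟩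

end Sphere

section Wedge

variable {n k : ℕ}

theorem wedgeRel_equivalence (p : Fin n → sphere (0 : E (k + 1)) 1) :
    Equivalence (wedgeRel n k p) where
  refl _ := Or.inl rfl
  symm := by
    rintro _ _ (rfl | ⟨h₁, h₂⟩)
    exacts [Or.inl rfl, Or.inr ⟨h₂, h₁⟩]
  trans := by
    rintro _ _ _ (rfl | ⟨h₁, h₂⟩) (rfl | ⟨h₃, h₄⟩)
    exacts [Or.inl rfl, Or.inr ⟨h₃, h₄⟩, Or.inr ⟨h₁, h₂⟩, Or.inr ⟨h₁, h₄⟩]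

/-- The wedge embeds into `(ℝ^(k+1))^n`: the `i`-th sphere goes to the `i`-th factor, its chosen
point to the origin. -/
instance (p : Fin n → sphere (0 : E (k + 1)) 1) : T2Space (Quot (wedgeRel n k p)) := by
  let f : Fin n × sphere (0 : E (k + 1)) 1 → Fin n → E (k + 1) :=
    fun z => Pi.single z.1 ((z.2 : E (k + 1)) - p z.1)
  have hf : ∀ a b, wedgeRel n k p a b → f a = f b := by
    rintro a b (rfl | ⟨ha, hb⟩)
    · rfl
    · simp [f, ha, hb]
  refine T2Space.of_injective_continuous (f := Quot.lift f hf) ?_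
    (continuous_quot_lift _ (continuous_prod_of_discrete_left.mpr fun c => ?_))
  · rintro ⟨c, z⟩ ⟨c', z'⟩ h
    change f (c, z) = f (c', z') at h
    refine Quot.sound ?_
    by_cases hz : (z : E (k + 1)) = p c
    · have : f (c', z') = 0 := by rw [← h]; simp [f, hz]
      simp only [f, Pi.single_eq_zero_iff, sub_eq_zero] at this
      exact Or.inr ⟨Subtype.ext hz, Subtype.ext this⟩
    · have hc := congrFun h c
      simp only [f, Pi.single_eq_same] at hc
      obtain rfl : c = c' := by
        by_contra hne
        rw [Pi.single_eq_of_ne hne] at hc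
        exact hz (sub_eq_zero.mp hc)
      simp only [Pi.single_eq_same, sub_left_inj] at hc
      exact Or.inl (Prod.ext rfl (Subtype.ext hc))
  · change Continuous fun z : sphere (0 : E (k + 1)) 1 =>
      (Pi.single c ((z : E (k + 1)) - p c) : Fin n → E (k + 1))
    exact (continuous_single c).comp (continuous_subtype_val.sub continuous_const)

end Wedge

variable {n k : ℕ}

variable (n k) in
noncomputable def basePoint : Fin n → sphere (0 : E (k + 1)) 1 := fun _ =>
  ⟨toSphere 0 false, mem_sphere_zero_iff_norm.mpr (norm_toSphere ⟨le_rfl, zero_le_two⟩ false)⟩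

theorem mk_toSphere_eq_mk_toSphere_iff (hk : k ≠ 0) {c c' : Fin n} {x x' : Fin k → ℝ}
    {b b' : Bool} (hx : x ∈ Icc 0 2) (hx' : x' ∈ Icc 0 2) (hz : toSphere x b ∈ sphere 0 1)
    (hz' : toSphere x' b' ∈ sphere 0 1) :
    Quot.mk (wedgeRel n k (basePoint n k)) (c, ⟨toSphere x b, hz⟩) =
        Quot.mk _ (c', ⟨toSphere x' b', hz'⟩) ↔
      DoubledCubeRel c x b c' x' b' := by
  have hbase : ∀ {y : Fin k → ℝ}, y = 0 → OnCubeBoundary y := fun hy =>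
    ⟨⟨0, Nat.pos_of_ne_zero hk⟩, Or.inl (congrFun hy _)⟩
  rw [(wedgeRel_equivalence _).quot_mk_eq_iff, wedgeRel]
  simp only [Prod.ext_iff, Subtype.ext_iff, basePoint]
  rw [toSphere_eq_iff hx, toSphere_eq_iff hx, toSphere_eq_iff hx', DoubledCubeRel]
  constructor
  · rintro (⟨rfl, rfl, h⟩ | ⟨⟨rfl, -⟩, rfl, -⟩)
    exacts [⟨rfl, Or.inr rfl, h⟩, ⟨rfl, Or.inl rfl, Or.inl (hbase rfl)⟩]
  · rintro ⟨rfl, rfl | rfl, h⟩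
    · exact Or.inr ⟨⟨rfl, Or.inl (hbase rfl)⟩, rfl, Or.inl (hbase rfl)⟩
    · exact Or.inl ⟨rfl, rfl, h⟩

namespace Cell

noncomputable def toWedge (x : Cell n k) : Quot (wedgeRel n k (basePoint n k)) :=
  Quot.mk _ (x.1.copy,
    ⟨toSphere x.pos x.1.sheet, mem_sphere_zero_iff_norm.mpr (norm_toSphere x.pos_mem_Icc _)⟩)

theorem continuous_toWedge : Continuous (toWedge (n := n) (k := k)) := by
  unfold toWedge pos
  refine continuous_sigma fun μ => continuous_quot_mk.comp ?_
  refine (continuous_const (y := μ.copy)).prodMk (Continuous.subtype_mk ?_ _)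
  dsimp only
  exact (continuous_toSphere μ.sheet).comp <| continuous_pi fun j =>
    (continuous_pos _).comp ((continuous_apply j).comp continuous_subtype_val)

theorem realRel_iff_toWedge_eq (hk : k ≠ 0) (x y : Cell n k) :
    realRel (wedgeGraph n k) x y ↔ x.toWedge = y.toWedge :=
  (realRel_iff x y).trans
    (mk_toSphere_eq_mk_toSphere_iff hk x.pos_mem_Icc y.pos_mem_Icc _ _).symm

theorem exists_pos_eq (hk : k ≠ 0) (c : Fin n) {x : Fin k → ℝ} (hx : x ∈ Icc 0 2) (b : Bool) :
    ∃ y : Cell n k, y.1.copy = c ∧ y.pos = x ∧ y.1.sheet = b := by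
  choose t ht u hu hpos using fun j => IntervalMor.exists_pos_eq ⟨hx.1 j, hx.2 j⟩
  have hd : ∀ j, (t j).d ≠ 0 := fun j => by simp [ht j]
  have hcorner : ¬ IsCorner t := fun h => hd ⟨0, Nat.pos_of_ne_zero hk⟩ (by rw [h]; rfl)
  have hface : ¬ OnFace t := fun ⟨j, hj⟩ => hd j (by rcases hj with h | h <;> rw [h] <;> rfl)
  refine ⟨⟨Mor.of c t b, u, fun j => (hu j).1, fun j => ?_⟩,
    Mor.copy_of_of_not_isCorner b hcorner, funext hpos, Mor.sheet_of_of_not_onFace c hface⟩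
  simpa [wedgeGraph, Mor.d, Mor.of, ht j] using (hu j).2

theorem toWedge_surjective (hk : k ≠ 0) : Function.Surjective (toWedge (n := n) (k := k)) := by
  rintro ⟨c, z, hz⟩
  obtain ⟨x, hx, b, rfl⟩ := exists_toSphere_eq (mem_sphere_zero_iff_norm.mp hz)
  obtain ⟨y, rfl, rfl, rfl⟩ := exists_pos_eq hk c hx b
  exact ⟨y, rfl⟩

end Cell

end WedgeOfSpheres

theorem wedge_of_spheres_realised_general (n k : ℕ) (hk : 1 ≤ k) :
    ∃ (M : Type) (S : KGraphOn k M)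
      (p : Fin n → Metric.sphere (0 : EuclideanSpace ℝ (Fin (k + 1))) 1),
      Finite M ∧ Nonempty (Realisation S ≃ₜ Quot (wedgeRel n k p)) := by
  have hk₀ : k ≠ 0 := Nat.one_le_iff_ne_zero.mp hk
  open WedgeOfSpheres in
  exact ⟨Mor n k, wedgeGraph n k, basePoint n k, inferInstance,
    Quotient.nonempty_homeomorph_of_compact_of_t2 _ Cell.continuous_toWedge
      (Cell.toWedge_surjective hk₀) (Cell.realRel_iff_toWedge_eq hk₀)⟩

/-- for each `n ≥ 1` and `k ≥ 1` there is a finite `k`-graph whose topological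
realisation is homeomorphic to a wedge of `n` `k`-spheres. -/
theorem wedge_of_spheres_realised (n k : ℕ) (hn : 1 ≤ n) (hk : 1 ≤ k) :
    ∃ (M : Type) (S : KGraphOn k M)
      (p : Fin n → Metric.sphere (0 : EuclideanSpace ℝ (Fin (k + 1))) 1),
      Finite M ∧ Nonempty (Realisation S ≃ₜ Quot (wedgeRel n k p)) :=
  wedge_of_spheres_realised_general n k hk
end
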